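/- arXiv:2202.10493 — 2 statements merged into one kernel-verified Lean document; each statement's English description precedes it below -/
import Mathlib

section
/- (Monotone iteration bound (3.1) in the proof of Theorem 1.2(i).) Let h, l : [0,∞) → [0,∞) be continuous and let f, g : [0,∞) → [0,∞) be locally Lipschitz with f(0) = g(0) = 0. Let m > 0 be such that f, g, s ↦ f(s)/s and s ↦ g(s)/s are nondecreasing on (0,m]. Let v₀ ∈ C_b(ℝ^N) be nonnegative, v₀ ≢ 0, with ‖v₀‖_∞ ≤ m, and let β > 0 satisfy ∫_0^∞ h(σ)·f(‖S(σ)v₀‖_∞)/‖S(σ)v₀‖_∞ dσ + ∫_0^∞ l(σ)·g(‖S(σ)v₀‖_∞)/‖S(σ)v₀‖_∞ dσ ≤ β/(β+1). Let 0 < δ < (1/(β+1))·min{1, m/‖v₀‖_∞} and set u₀ = δ v₀. Define the iterates u⁰(t) = S(t)u₀ and u^{k+1}(t) = S(t)u₀ + ∫_0^t S(t−σ)[h(σ)f(u^k(σ)) + l(σ)g(u^k(σ))] dσ for k ≥ 0. Then for every k ≥ 0, every t > 0 and every x ∈ ℝ^N one has 0 ≤ u^k(t)(x) ≤ u^{k+1}(t)(x)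 ≤ (1+β)·S(t)u₀(x). -/
/-!
Write `ū(t) = (1 + β) S(t)u₀`. As `δ (1 + β) ≤ 1`, `ū(σ) ≤ ‖S(σ)v₀‖ ≤ m`, so for `0 ≤ v ≤ ū`
monotonicity of `f` and of `s ↦ f(s)/s` on `(0, m]` gives
`f(v) ≤ f(ū) ≤ (f(‖S(σ)v₀‖)/‖S(σ)v₀‖) ū`, and likewise for `g`. By the semigroup property `S(t - σ)ū(σ) = ū(t)`, so the Duhamel term of `v` is
at most `(β/(β+1)) ū(t) = β S(t)u₀`: the Picard map sends the order interval `[0, ū]` into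
itself. It is monotone there and `u¹ ≥ u⁰`, so induction on `k` gives the monotone chain. The
induction also carries the measurability of the iterates, without which the integrals defining
them would be junk.
-/

open MeasureTheory Real Set Metric Filter

noncomputable section

/-- `ℝ^N`. -/
abbrev EucN (N : ℕ) := EuclideanSpace ℝ (Fin N)

/-- `C_b(ℝ^N)`, the bounded continuous functions with the sup norm. -/
abbrev CbN (N : ℕ) := BoundedContinuousFunction (EucN N) ℝ

open Function

section HeatKernel

variable {X : Type*} [MeasurableSpace X] {μ : Measure X} {Γ : X → X → ℝ → ℝ}

structure IsHeatKernel (μ : Measure X) (Γ : X → X → ℝ → ℝ) : Prop where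
  measurable : Measurable fun p : X × X × ℝ => Γ p.1 p.2.1 p.2.2
  nonneg : ∀ x y t, 0 < t → 0 ≤ Γ x y t
  integral_eq_one : ∀ x t, 0 < t → ∫ y, Γ x y t ∂μ = 1
  chapman_kolmogorov : ∀ x y s t, 0 < s → s < t → Γ x y t = ∫ ξ, Γ x ξ (t - s) * Γ ξ y s ∂μ

/-- The paper's `S(t)φ`, for an arbitrary `φ : X → ℝ`. -/
def heatOp (μ : Measure X) (Γ : X → X → ℝ → ℝ) (t : ℝ) (φ : X → ℝ) (x : X) : ℝ :=
  ∫ y, Γ x y t * φ y ∂μ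

lemma heatOp_const_mul (t c : ℝ) (φ : X → ℝ) (x : X) :
    heatOp μ Γ t (fun y => c * φ y) x = c * heatOp μ Γ t φ x := by
  simp only [heatOp, mul_left_comm _ c, integral_const_mul]

def duhamel (μ : Measure X) (Γ : X → X → ℝ → ℝ) (Ψ : ℝ → X → ℝ) (t : ℝ) (x : X) : ℝ :=
  ∫ σ in 0..t, heatOp μ Γ (t - σ) (Ψ σ) x

/-- Dropping `σ = t` matters: there the kernel is evaluated at time `0`, where nothing is known
about it. -/
lemma duhamel_eq_setIntegral_Ioo {Ψ : ℝ → X → ℝ} {t : ℝ} (ht : 0 ≤ t) (x : X) :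
    duhamel μ Γ Ψ t x = ∫ σ in Ioo 0 t, heatOp μ Γ (t - σ) (Ψ σ) x := by
  rw [duhamel, intervalIntegral.integral_of_le ht, integral_Ioc_eq_integral_Ioo]

namespace IsHeatKernel

variable (hΓ : IsHeatKernel μ Γ) {t : ℝ} {x : X}
include hΓ

lemma integrable (ht : 0 < t) (x : X) : Integrable (fun y => Γ x y t) μ :=
  Integrable.of_integral_ne_zero (by rw [hΓ.integral_eq_one x t ht]; exact one_ne_zero)

lemma measurable_comp {Y : Type*} [MeasurableSpace Y] {a b : Y → X} {s : Y → ℝ}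
    (ha : Measurable a) (hb : Measurable b) (hs : Measurable s) :
    Measurable fun p => Γ (a p) (b p) (s p) :=
  hΓ.measurable.comp (ha.prodMk (hb.prodMk hs))

lemma integrable_mul (ht : 0 < t) (x : X) {φ : X → ℝ} (hφ : Measurable φ) {C : ℝ}
    (hφC : ∀ y, |φ y| ≤ C) : Integrable (fun y => Γ x y t * φ y) μ :=
  (hΓ.integrable ht x).mul_bdd hφ.aestronglyMeasurable (.of_forall hφC)

lemma heatOp_nonneg (ht : 0 < t) {φ : X → ℝ} (hφ : ∀ y, 0 ≤ φ y) : 0 ≤ heatOp μ Γ t φ x :=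
  integral_nonneg fun y => mul_nonneg (hΓ.nonneg x y t ht) (hφ y)

lemma heatOp_const (ht : 0 < t) (c : ℝ) : heatOp μ Γ t (fun _ => c) x = c := by
  rw [heatOp, integral_mul_const, hΓ.integral_eq_one x t ht, one_mul]

lemma heatOp_mono (ht : 0 < t) {φ ψ : X → ℝ} (hφ : ∀ y, 0 ≤ φ y) (hφψ : ∀ y, φ y ≤ ψ y)
    (hψ : Measurable ψ) {C : ℝ} (hψC : ∀ y, ψ y ≤ C) :
    heatOp μ Γ t φ x ≤ heatOp μ Γ t ψ x :=
  integral_mono_of_nonneg (.of_forall fun y => mul_nonneg (hΓ.nonneg x y t ht) (hφ y))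
    (hΓ.integrable_mul ht x hψ fun y => abs_le.2 ⟨by linarith [hφ y, hφψ y, hψC y], hψC y⟩)
    (.of_forall fun y => mul_le_mul_of_nonneg_left (hφψ y) (hΓ.nonneg x y t ht))

lemma heatOp_le (ht : 0 < t) {φ : X → ℝ} (hφ : ∀ y, 0 ≤ φ y) {C : ℝ} (hφC : ∀ y, φ y ≤ C) :
    heatOp μ Γ t φ x ≤ C :=
  (hΓ.heatOp_mono ht hφ hφC measurable_const fun _ => le_rfl).trans_eq (hΓ.heatOp_const ht C)

variable [SFinite μ]

lemma measurable_heatOp {Y : Type*} [MeasurableSpace Y] {s : Y → ℝ} {a : Y → X}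
    (hs : Measurable s) (ha : Measurable a) {Ψ : Y → X → ℝ} (hΨ : Measurable (uncurry Ψ)) :
    Measurable fun p => heatOp μ Γ (s p) (Ψ p) (a p) :=
  ((hΓ.measurable_comp (ha.comp measurable_fst) measurable_snd (hs.comp measurable_fst)).mul
    hΨ).stronglyMeasurable.integral_prod_right'.measurable

lemma integrable_kernel_mul_kernel_mul {φ : X → ℝ} (hφ : Measurable φ) {B : ℝ}
    (hφB : ∀ y, |φ y| ≤ B) {s : ℝ} (hs : 0 < s) (ht : 0 < t) (x : X) :
    Integrable (fun p : X × X => Γ x p.1 t * (Γ p.1 p.2 s * φ p.2)) (μ.prod μ) := by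
  have hm : Measurable fun p : X × X => Γ x p.1 t * (Γ p.1 p.2 s * φ p.2) :=
    (hΓ.measurable_comp measurable_const measurable_fst measurable_const).mul
      ((hΓ.measurable_comp measurable_fst measurable_snd measurable_const).mul
        (hφ.comp measurable_snd))
  refine (integrable_prod_iff hm.aestronglyMeasurable).2
    ⟨.of_forall fun ξ => (hΓ.integrable_mul hs ξ hφ hφB).const_mul (Γ x ξ t), ?_⟩
  refine ((hΓ.integrable ht x).mul_const B).mono'
    hm.stronglyMeasurable.norm.integral_prod_right'.aestronglyMeasurable (.of_forall fun ξ => ?_)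
  have hΓξ := hΓ.nonneg x ξ t ht
  calc ‖∫ y, ‖Γ x ξ t * (Γ ξ y s * φ y)‖ ∂μ‖ = Γ x ξ t * heatOp μ Γ s (fun y => |φ y|) ξ := by
        rw [norm_of_nonneg (integral_nonneg fun _ => norm_nonneg _)]
        simp only [heatOp, norm_mul, Real.norm_eq_abs, abs_of_nonneg hΓξ,
          abs_of_nonneg (hΓ.nonneg ξ _ s hs), integral_const_mul]
    _ ≤ Γ x ξ t * B :=
        mul_le_mul_of_nonneg_left (hΓ.heatOp_le hs (fun _ => abs_nonneg _) hφB) hΓξ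

lemma heatOp_heatOp {φ : X → ℝ} (hφ : Measurable φ) {B : ℝ} (hφB : ∀ y, |φ y| ≤ B)
    {s : ℝ} (hs : 0 < s) (hst : s < t) :
    heatOp μ Γ (t - s) (heatOp μ Γ s φ) x = heatOp μ Γ t φ x := by
  calc heatOp μ Γ (t - s) (heatOp μ Γ s φ) x
      = ∫ ξ, ∫ y, Γ x ξ (t - s) * (Γ ξ y s * φ y) ∂μ ∂μ := by
        simp only [heatOp, integral_const_mul]
    _ = ∫ y, ∫ ξ, Γ x ξ (t - s) * (Γ ξ y s * φ y) ∂μ ∂μ :=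
        integral_integral_swap (hΓ.integrable_kernel_mul_kernel_mul hφ hφB hs (sub_pos.2 hst) x)
    _ = heatOp μ Γ t φ x := by
        refine integral_congr_ae (.of_forall fun y => ?_)
        simp only [hΓ.chapman_kolmogorov x y s t hs hst, ← integral_mul_const, mul_assoc]

end IsHeatKernel

lemma measurable_setIntegral_Ioo {Y : Type*} [MeasurableSpace Y] {G : Y → ℝ → ℝ}
    (hG : Measurable (uncurry G)) {a : Y → ℝ} (ha : Measurable a) :
    Measurable fun p => ∫ σ in Ioo 0 (a p), G p σ := by
  have hs : MeasurableSet {p : Y × ℝ | p.2 ∈ Ioo 0 (a p.1)} :=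
    (measurableSet_lt measurable_const measurable_snd).inter
      (measurableSet_lt measurable_snd (ha.comp measurable_fst))
  simp_rw [← integral_indicator measurableSet_Ioo]
  exact (hG.indicator hs).stronglyMeasurable.integral_prod_right'.measurable

/-- The iterates are only specified for `t > 0`, and the nonlinearities only controlled on
`[0, m]`, so their measurability is tracked through a measurable representative on `t > 0`. -/
def PosTimeMeasurable (v : ℝ → X → ℝ) : Prop :=
  ∃ w : ℝ → X → ℝ, Measurable (uncurry w) ∧ ∀ t > 0, w t = v t

namespace PosTimeMeasurable

variable {v w : ℝ → X → ℝ}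

lemma of_measurable (hv : Measurable (uncurry v)) : PosTimeMeasurable v :=
  ⟨v, hv, fun _ _ => rfl⟩

lemma congr (hv : PosTimeMeasurable v) (hvw : ∀ t > 0, ∀ x, v t x = w t x) :
    PosTimeMeasurable w := by
  obtain ⟨v', hv', hv'v⟩ := hv
  exact ⟨v', hv', fun t ht => funext fun x => by rw [hv'v t ht, hvw t ht]⟩

lemma measurable (hv : PosTimeMeasurable v) {t : ℝ} (ht : 0 < t) : Measurable (v t) := by
  obtain ⟨v', hv', hv'v⟩ := hv
  exact hv'v t ht ▸ hv'.comp measurable_prodMk_left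

lemma add (hv : PosTimeMeasurable v) (hw : PosTimeMeasurable w) :
    PosTimeMeasurable fun t x => v t x + w t x := by
  obtain ⟨v', hv', hv'v⟩ := hv
  obtain ⟨w', hw', hw'w⟩ := hw
  exact ⟨fun t x => v' t x + w' t x, hv'.add hw', fun t ht => by simp only [hv'v t ht, hw'w t ht]⟩

lemma comp_continuousOn {F : ℝ → ℝ → ℝ} {c : ℝ}
    (hF : ContinuousOn (uncurry F) (Ioi 0 ×ˢ Icc 0 c)) (hv : PosTimeMeasurable v)
    (hvc : ∀ t > 0, ∀ x, v t x ∈ Icc 0 c) : PosTimeMeasurable fun t x => F t (v t x) := by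
  classical
  obtain ⟨v', hv', hv'v⟩ := hv
  set F' := (Ioi 0 ×ˢ Icc 0 c).piecewise (uncurry F) 0
  have hF' : Measurable F' :=
    hF.measurable_piecewise continuousOn_const (measurableSet_Ioi.prod measurableSet_Icc)
  refine ⟨fun t x => F' (t, v' t x), hF'.comp (measurable_fst.prodMk hv'), fun t ht => ?_⟩
  funext x
  show F' (t, v' t x) = F t (v t x)
  rw [hv'v t ht]
  exact piecewise_eq_of_mem _ _ _ ⟨ht, hvc t ht x⟩

variable [SFinite μ] (hΓ : IsHeatKernel μ Γ) {Ψ : ℝ → X → ℝ}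
include hΓ

lemma duhamel (hΨ : PosTimeMeasurable Ψ) : PosTimeMeasurable (duhamel μ Γ Ψ) := by
  obtain ⟨Ψ', hΨ', hΨ'Ψ⟩ := hΨ
  refine ⟨fun t x => ∫ σ in Ioo 0 t, heatOp μ Γ (t - σ) (Ψ' σ) x,
    ?_, fun t ht => funext fun x => ?_⟩
  · refine measurable_setIntegral_Ioo (G := fun p σ => heatOp μ Γ (p.1 - σ) (Ψ' σ) p.2) ?_
      measurable_fst
    exact hΓ.measurable_heatOp (measurable_fst.fst.sub measurable_snd) measurable_fst.snd
      (hΨ'.comp (measurable_fst.snd.prodMk measurable_snd))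
  · rw [duhamel_eq_setIntegral_Ioo ht.le]
    exact setIntegral_congr_fun measurableSet_Ioo fun σ hσ => by rw [hΨ'Ψ σ hσ.1]

lemma aestronglyMeasurable_heatOp (hΨ : PosTimeMeasurable Ψ) (t : ℝ) (x : X) :
    AEStronglyMeasurable (fun σ => heatOp μ Γ (t - σ) (Ψ σ) x) (volume.restrict (Ioo 0 t)) := by
  obtain ⟨Ψ', hΨ', hΨ'Ψ⟩ := hΨ
  refine (hΓ.measurable_heatOp (s := fun σ => t - σ) (a := fun _ => x)
    (measurable_const.sub measurable_id) measurable_const hΨ').aestronglyMeasurable.congr ?_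
  filter_upwards [ae_restrict_mem measurableSet_Ioo] with σ hσ
  rw [hΨ'Ψ σ hσ.1]

end PosTimeMeasurable

namespace IsHeatKernel

section Duhamel

variable (hΓ : IsHeatKernel μ Γ) {Ψ : ℝ → X → ℝ} {t : ℝ}
include hΓ

lemma duhamel_nonneg (hΨ0 : ∀ σ > 0, ∀ y, 0 ≤ Ψ σ y) (ht : 0 ≤ t) (x : X) :
    0 ≤ duhamel μ Γ Ψ t x := by
  rw [duhamel_eq_setIntegral_Ioo ht]
  exact setIntegral_nonneg measurableSet_Ioo fun σ hσ =>
    hΓ.heatOp_nonneg (sub_pos.2 hσ.2) (hΨ0 σ hσ.1)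

variable [SFinite μ] {φ : X → ℝ} (hφ : Measurable φ) (hφ0 : ∀ y, 0 ≤ φ y) {B : ℝ}
  (hφB : ∀ y, φ y ≤ B) {q : ℝ → ℝ} (hq0 : ∀ σ > 0, 0 ≤ q σ)
include hφ hφ0 hφB hq0

lemma heatOp_le_mul_heatOp (hΨ0 : ∀ σ > 0, ∀ y, 0 ≤ Ψ σ y)
    (hΨq : ∀ σ > 0, ∀ y, Ψ σ y ≤ q σ * heatOp μ Γ σ φ y) {σ : ℝ} (hσ : 0 < σ) (hσt : σ < t)
    (x : X) : heatOp μ Γ (t - σ) (Ψ σ) x ≤ q σ * heatOp μ Γ t φ x := by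
  have hφB' : ∀ y, |φ y| ≤ B := fun y => (abs_of_nonneg (hφ0 y)).trans_le (hφB y)
  calc heatOp μ Γ (t - σ) (Ψ σ) x ≤ heatOp μ Γ (t - σ) (fun y => q σ * heatOp μ Γ σ φ y) x :=
        hΓ.heatOp_mono (sub_pos.2 hσt) (hΨ0 σ hσ) (hΨq σ hσ)
          (measurable_const.mul (hΓ.measurable_heatOp measurable_const measurable_id
            (Ψ := fun _ => φ) (hφ.comp measurable_snd)))
          fun y => mul_le_mul_of_nonneg_left (hΓ.heatOp_le hσ hφ0 hφB) (hq0 σ hσ)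
    _ = q σ * heatOp μ Γ t φ x := by
        rw [heatOp_const_mul, hΓ.heatOp_heatOp hφ hφB' hσ hσt]

variable (hq : IntegrableOn q (Ioi 0))
include hq

lemma duhamel_le (hΨ0 : ∀ σ > 0, ∀ y, 0 ≤ Ψ σ y)
    (hΨq : ∀ σ > 0, ∀ y, Ψ σ y ≤ q σ * heatOp μ Γ σ φ y) (ht : 0 < t) (x : X) :
    duhamel μ Γ Ψ t x ≤ (∫ σ in Ioi 0, q σ) * heatOp μ Γ t φ x := by
  rw [duhamel_eq_setIntegral_Ioo ht.le]
  calc ∫ σ in Ioo 0 t, heatOp μ Γ (t - σ) (Ψ σ) x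
      ≤ ∫ σ in Ioo 0 t, q σ * heatOp μ Γ t φ x := by
        refine integral_mono_of_nonneg ?_ ((hq.mono_set Ioo_subset_Ioi_self).mul_const _) ?_
        all_goals filter_upwards [ae_restrict_mem measurableSet_Ioo] with σ hσ
        · exact hΓ.heatOp_nonneg (sub_pos.2 hσ.2) (hΨ0 σ hσ.1)
        · exact hΓ.heatOp_le_mul_heatOp hφ hφ0 hφB hq0 hΨ0 hΨq hσ.1 hσ.2 x
    _ = (∫ σ in Ioo 0 t, q σ) * heatOp μ Γ t φ x := integral_mul_const _ _
    _ ≤ (∫ σ in Ioi 0, q σ) * heatOp μ Γ t φ x := by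
        refine mul_le_mul_of_nonneg_right (setIntegral_mono_set hq ?_
          Ioo_subset_Ioi_self.eventuallyLE) (hΓ.heatOp_nonneg ht hφ0)
        filter_upwards [ae_restrict_mem measurableSet_Ioi] with σ hσ using hq0 σ hσ

lemma duhamel_mono {Ψ' : ℝ → X → ℝ} (hΨ0 : ∀ σ > 0, ∀ y, 0 ≤ Ψ σ y)
    (hΨΨ' : ∀ σ > 0, ∀ y, Ψ σ y ≤ Ψ' σ y) (hΨ' : PosTimeMeasurable Ψ')
    (hΨ'q : ∀ σ > 0, ∀ y, Ψ' σ y ≤ q σ * heatOp μ Γ σ φ y) (ht : 0 < t) (x : X) :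
    duhamel μ Γ Ψ t x ≤ duhamel μ Γ Ψ' t x := by
  have hΨ'0 : ∀ σ > 0, ∀ y, 0 ≤ Ψ' σ y := fun σ hσ y => (hΨ0 σ hσ y).trans (hΨΨ' σ hσ y)
  have hint : IntegrableOn (fun σ => heatOp μ Γ (t - σ) (Ψ' σ) x) (Ioo 0 t) := by
    refine ((hq.mono_set Ioo_subset_Ioi_self).mul_const (heatOp μ Γ t φ x)).mono'
      (hΨ'.aestronglyMeasurable_heatOp hΓ t x) ?_
    filter_upwards [ae_restrict_mem measurableSet_Ioo] with σ hσ
    rw [Real.norm_eq_abs, abs_of_nonneg (hΓ.heatOp_nonneg (sub_pos.2 hσ.2) (hΨ'0 σ hσ.1))]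
    exact hΓ.heatOp_le_mul_heatOp hφ hφ0 hφB hq0 hΨ'0 hΨ'q hσ.1 hσ.2 x
  rw [duhamel_eq_setIntegral_Ioo ht.le, duhamel_eq_setIntegral_Ioo ht.le]
  refine integral_mono_of_nonneg ?_ hint ?_
  all_goals filter_upwards [ae_restrict_mem measurableSet_Ioo] with σ hσ
  · exact hΓ.heatOp_nonneg (sub_pos.2 hσ.2) (hΨ0 σ hσ.1)
  · exact hΓ.heatOp_mono (sub_pos.2 hσ.2) (hΨ0 σ hσ.1) (hΨΨ' σ hσ.1) (hΨ'.measurable hσ.1)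
      fun y => (hΨ'q σ hσ.1 y).trans (mul_le_mul_of_nonneg_left (hΓ.heatOp_le hσ.1 hφ0 hφB)
        (hq0 σ hσ.1))

end Duhamel

section PicardIteration

variable (hΓ : IsHeatKernel μ Γ) {φ : X → ℝ} (hφ0 : ∀ y, 0 ≤ φ y) {B : ℝ}
  (hφB : ∀ y, φ y ≤ B) {β : ℝ} (hβ : 0 ≤ β)
include hΓ hφ0 hφB hβ

lemma mem_Icc_of_le_supersolution {σ a : ℝ} (hσ : 0 < σ) {y : X} (ha0 : 0 ≤ a)
    (ha : a ≤ (1 + β) * heatOp μ Γ σ φ y) : a ∈ Icc 0 ((1 + β) * B) :=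
  ⟨ha0, ha.trans (mul_le_mul_of_nonneg_left (hΓ.heatOp_le hσ hφ0 hφB) (by linarith))⟩

variable {F : ℝ → ℝ → ℝ} (hFmono : ∀ σ > 0, MonotoneOn (F σ) (Icc 0 ((1 + β) * B)))
  (hF0 : ∀ σ > 0, 0 ≤ F σ 0) {q : ℝ → ℝ}
  (hFq : ∀ σ > 0, ∀ y,
    F σ ((1 + β) * heatOp μ Γ σ φ y) ≤ q σ * ((1 + β) * heatOp μ Γ σ φ y))
include hFmono hF0 hFq

lemma nonlinearity_mem_Icc {σ a : ℝ} (hσ : 0 < σ) {y : X} (ha0 : 0 ≤ a)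
    (ha : a ≤ (1 + β) * heatOp μ Γ σ φ y) :
    F σ a ∈ Icc 0 (q σ * ((1 + β) * heatOp μ Γ σ φ y)) := by
  have hmem {a' : ℝ} : 0 ≤ a' → a' ≤ (1 + β) * heatOp μ Γ σ φ y → a' ∈ Icc 0 ((1 + β) * B) :=
    hΓ.mem_Icc_of_le_supersolution hφ0 hφB hβ hσ
  have hū0 : 0 ≤ (1 + β) * heatOp μ Γ σ φ y :=
    mul_nonneg (by linarith) (hΓ.heatOp_nonneg hσ hφ0)
  exact ⟨(hF0 σ hσ).trans (hFmono σ hσ (hmem le_rfl (ha0.trans ha)) (hmem ha0 ha) ha0),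
    (hFmono σ hσ (hmem ha0 ha) (hmem hū0 le_rfl) ha).trans (hFq σ hσ y)⟩

lemma duhamel_nonlinearity_nonneg {v : ℝ → X → ℝ}
    (hv : ∀ σ > 0, ∀ y, 0 ≤ v σ y ∧ v σ y ≤ (1 + β) * heatOp μ Γ σ φ y) {t : ℝ} (ht : 0 ≤ t)
    (x : X) : 0 ≤ duhamel μ Γ (fun σ y => F σ (v σ y)) t x :=
  hΓ.duhamel_nonneg (fun σ hσ y =>
    (hΓ.nonlinearity_mem_Icc hφ0 hφB hβ hFmono hF0 hFq hσ (hv σ hσ y).1 (hv σ hσ y).2).1) ht x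

variable [SFinite μ] (hφ : Measurable φ) (hq : IntegrableOn q (Ioi 0)) (hq0 : ∀ σ > 0, 0 ≤ q σ)
include hφ hq hq0

lemma duhamel_nonlinearity_le (hqβ : ∫ σ in Ioi 0, q σ ≤ β / (β + 1)) {v : ℝ → X → ℝ}
    (hv : ∀ σ > 0, ∀ y, 0 ≤ v σ y ∧ v σ y ≤ (1 + β) * heatOp μ Γ σ φ y) {t : ℝ} (ht : 0 < t)
    (x : X) : duhamel μ Γ (fun σ y => F σ (v σ y)) t x ≤ β * heatOp μ Γ t φ x := by
  have hΨ := fun σ (hσ : 0 < σ) y =>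
    hΓ.nonlinearity_mem_Icc hφ0 hφB hβ hFmono hF0 hFq hσ (hv σ hσ y).1 (hv σ hσ y).2
  have h1β : 0 ≤ 1 + β := by linarith
  calc duhamel μ Γ (fun σ y => F σ (v σ y)) t x
      ≤ (∫ σ in Ioi 0, q σ) * heatOp μ Γ t (fun y => (1 + β) * φ y) x :=
        hΓ.duhamel_le (hφ.const_mul _) (fun y => mul_nonneg h1β (hφ0 y))
          (fun y => mul_le_mul_of_nonneg_left (hφB y) h1β) hq0 hq (fun σ hσ y => (hΨ σ hσ y).1)
          (fun σ hσ y => heatOp_const_mul σ (1 + β) φ y ▸ (hΨ σ hσ y).2) ht x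
    _ ≤ β / (β + 1) * ((1 + β) * heatOp μ Γ t φ x) := by
        rw [heatOp_const_mul]
        exact mul_le_mul_of_nonneg_right hqβ (mul_nonneg h1β (hΓ.heatOp_nonneg ht hφ0))
    _ = β * heatOp μ Γ t φ x := by field_simp; ring

lemma duhamel_nonlinearity_mono {v w : ℝ → X → ℝ}
    (hv : ∀ σ > 0, ∀ y, 0 ≤ v σ y ∧ v σ y ≤ (1 + β) * heatOp μ Γ σ φ y)
    (hw : ∀ σ > 0, ∀ y, 0 ≤ w σ y ∧ w σ y ≤ (1 + β) * heatOp μ Γ σ φ y)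
    (hwmeas : PosTimeMeasurable w) (hF : ContinuousOn (uncurry F) (Ioi 0 ×ˢ Icc 0 ((1 + β) * B)))
    (hvw : ∀ σ > 0, ∀ y, v σ y ≤ w σ y) {t : ℝ} (ht : 0 < t) (x : X) :
    duhamel μ Γ (fun σ y => F σ (v σ y)) t x ≤ duhamel μ Γ (fun σ y => F σ (w σ y)) t x := by
  have hmem := fun {u : ℝ → X → ℝ}
      (hu : ∀ σ > 0, ∀ y, 0 ≤ u σ y ∧ u σ y ≤ (1 + β) * heatOp μ Γ σ φ y) σ (hσ : 0 < σ) y =>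
    hΓ.mem_Icc_of_le_supersolution hφ0 hφB hβ hσ (hu σ hσ y).1 (hu σ hσ y).2
  have h1β : 0 ≤ 1 + β := by linarith
  refine hΓ.duhamel_mono (hφ.const_mul _) (fun y => mul_nonneg h1β (hφ0 y))
    (fun y => mul_le_mul_of_nonneg_left (hφB y) h1β) hq0 hq
    (fun σ hσ y => (hΓ.nonlinearity_mem_Icc hφ0 hφB hβ hFmono hF0 hFq hσ (hv σ hσ y).1
      (hv σ hσ y).2).1)
    (fun σ hσ y => hFmono σ hσ (hmem hv σ hσ y) (hmem hw σ hσ y) (hvw σ hσ y))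
    (hwmeas.comp_continuousOn hF (hmem hw)) (fun σ hσ y => ?_) ht x
  rw [heatOp_const_mul]
  exact (hΓ.nonlinearity_mem_Icc hφ0 hφB hβ hFmono hF0 hFq hσ (hw σ hσ y).1 (hw σ hσ y).2).2

variable (hF : ContinuousOn (uncurry F) (Ioi 0 ×ˢ Icc 0 ((1 + β) * B)))
  (hqβ : ∫ σ in Ioi 0, q σ ≤ β / (β + 1))
  {u : ℕ → ℝ → X → ℝ} (hu0 : ∀ t > 0, ∀ x, u 0 t x = heatOp μ Γ t φ x)
  (hu : ∀ k, ∀ t > 0, ∀ x,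
    u (k + 1) t x = heatOp μ Γ t φ x + duhamel μ Γ (fun σ y => F σ (u k σ y)) t x)
include hF hqβ hu0 hu

lemma picard_iterate_le_supersolution (k : ℕ) :
    PosTimeMeasurable (u k) ∧
      ∀ t > 0, ∀ x, 0 ≤ u k t x ∧ u k t x ≤ (1 + β) * heatOp μ Γ t φ x := by
  have hP : PosTimeMeasurable fun t => heatOp μ Γ t φ :=
    .of_measurable (hΓ.measurable_heatOp measurable_fst measurable_snd (hφ.comp measurable_snd))
  induction k with
  | zero =>
    refine ⟨hP.congr fun t ht x => (hu0 t ht x).symm, fun t ht x => ?_⟩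
    have hPt := hΓ.heatOp_nonneg (x := x) ht hφ0
    rw [hu0 t ht x]
    exact ⟨hPt, by nlinarith⟩
  | succ k ih =>
    obtain ⟨hmeas, hbd⟩ := ih
    have hΨmeas : PosTimeMeasurable fun σ y => F σ (u k σ y) :=
      hmeas.comp_continuousOn hF fun σ hσ y =>
        hΓ.mem_Icc_of_le_supersolution hφ0 hφB hβ hσ (hbd σ hσ y).1 (hbd σ hσ y).2
    refine ⟨(hP.add (hΨmeas.duhamel hΓ)).congr fun t ht x => (hu k t ht x).symm,
      fun t ht x => ?_⟩
    have hPt := hΓ.heatOp_nonneg (x := x) ht hφ0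
    have hD0 := hΓ.duhamel_nonlinearity_nonneg hφ0 hφB hβ hFmono hF0 hFq hbd ht.le x
    have hDβ := hΓ.duhamel_nonlinearity_le hφ0 hφB hβ hFmono hF0 hFq hφ hq hq0 hqβ hbd ht x
    rw [hu k t ht x]
    exact ⟨by linarith, by linarith⟩

theorem monotone_picard_iterates (k : ℕ) {t : ℝ} (ht : 0 < t) (x : X) :
    0 ≤ u k t x ∧ u k t x ≤ u (k + 1) t x ∧ u (k + 1) t x ≤ (1 + β) * heatOp μ Γ t φ x := by
  have hinv := hΓ.picard_iterate_le_supersolution hφ0 hφB hβ hFmono hF0 hFq hφ hq hq0 hF hqβ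
    hu0 hu
  have hmono : ∀ k, ∀ t > 0, ∀ x, u k t x ≤ u (k + 1) t x := by
    intro k
    induction k with
    | zero =>
      intro t ht x
      rw [hu 0 t ht x, hu0 t ht x]
      exact le_add_of_nonneg_right
        (hΓ.duhamel_nonlinearity_nonneg hφ0 hφB hβ hFmono hF0 hFq (hinv 0).2 ht.le x)
    | succ k ih =>
      intro t ht x
      rw [hu (k + 1) t ht x, hu k t ht x]
      exact add_le_add le_rfl (hΓ.duhamel_nonlinearity_mono hφ0 hφB hβ hFmono hF0 hFq hφ hq hq0
        (hinv k).2 (hinv (k + 1)).2 (hinv (k + 1)).1 hF ih ht x)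
  exact ⟨((hinv k).2 t ht x).1, hmono k t ht x, ((hinv (k + 1)).2 t ht x).2⟩

end PicardIteration

end IsHeatKernel

end HeatKernel

namespace IsHeatKernel

variable {X : Type*} [TopologicalSpace X] [MeasurableSpace X] {μ : Measure X}
  {Γ : X → X → ℝ → ℝ} (hΓ : IsHeatKernel μ Γ) {t : ℝ} (ht : 0 < t)
  {v w : BoundedContinuousFunction X ℝ} (hv : ∀ x, 0 ≤ v x) (hw : ∀ x, w x = heatOp μ Γ t v x)
include hΓ ht hv hw

lemma norm_le : ‖w‖ ≤ ‖v‖ :=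
  (BoundedContinuousFunction.norm_le (norm_nonneg v)).2 fun x => by
    rw [hw, Real.norm_eq_abs, abs_of_nonneg (hΓ.heatOp_nonneg ht hv)]
    exact hΓ.heatOp_le ht hv v.apply_le_norm

lemma mul_heatOp_smul_mem_Icc {a b : ℝ} (ha : 0 ≤ a) (hb : 0 ≤ b) (hab : b * a ≤ 1) (y : X) :
    a * heatOp μ Γ t ⇑(b • v) y ∈ Icc 0 ‖w‖ := by
  have hwy : 0 ≤ w y := hw y ▸ hΓ.heatOp_nonneg ht hv
  have hbv : heatOp μ Γ t ⇑(b • v) y = b * w y := by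
    rw [hw]
    exact heatOp_const_mul t b v y
  rw [hbv]
  exact ⟨by positivity, by nlinarith [w.apply_le_norm y]⟩

end IsHeatKernel

structure IsAdmissibleNonlinearity (f : ℝ → ℝ) (m : ℝ) : Prop where
  continuousOn : ContinuousOn f (Icc 0 m)
  nonneg : ∀ s, 0 ≤ s → 0 ≤ f s
  map_zero : f 0 = 0
  monotoneOn : MonotoneOn f (Ioc 0 m)
  monotoneOn_div : MonotoneOn (fun s => f s / s) (Ioc 0 m)

lemma integrable_add_and_integral_le {α : Type*} [MeasurableSpace α] {ν : Measure α}
    {q₁ q₂ : α → ℝ} (h₁ : AEMeasurable q₁ ν) (h₂ : AEMeasurable q₂ ν) (h₁0 : 0 ≤ᵐ[ν] q₁)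
    (h₂0 : 0 ≤ᵐ[ν] q₂) {c : ℝ} (hc : 0 ≤ c)
    (hle : (∫⁻ a, ENNReal.ofReal (q₁ a) ∂ν) + ∫⁻ a, ENNReal.ofReal (q₂ a) ∂ν ≤ ENNReal.ofReal c) :
    Integrable (fun a => q₁ a + q₂ a) ν ∧ ∫ a, (q₁ a + q₂ a) ∂ν ≤ c := by
  have hmeas : AEStronglyMeasurable (fun a => q₁ a + q₂ a) ν := (h₁.add h₂).aestronglyMeasurable
  have h0 : 0 ≤ᵐ[ν] fun a => q₁ a + q₂ a := by
    filter_upwards [h₁0, h₂0] with a ha₁ ha₂ using add_nonneg ha₁ ha₂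
  have hL : ∫⁻ a, ENNReal.ofReal (q₁ a + q₂ a) ∂ν ≤ ENNReal.ofReal c :=
    (lintegral_mono fun _ => ENNReal.ofReal_add_le).trans
      ((lintegral_add_left' h₁.ennreal_ofReal _).trans_le hle)
  refine ⟨(lintegral_ofReal_ne_top_iff_integrable hmeas h0).1
    (ne_top_of_le_ne_top ENNReal.ofReal_ne_top hL), ?_⟩
  rw [integral_eq_lintegral_of_nonneg_ae h0 hmeas]
  exact ENNReal.toReal_le_of_le_ofReal hc hL

lemma aemeasurable_mul_comp_div {h f Φ : ℝ → ℝ} {m : ℝ} (hh : ContinuousOn h (Ici 0))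
    (hf : ContinuousOn f (Icc 0 m)) (hΦ : ContinuousOn Φ (Ici 0))
    (hΦm : MapsTo Φ (Ioi 0) (Icc 0 m)) :
    AEMeasurable (fun σ => h σ * f (Φ σ) / Φ σ) (volume.restrict (Ioi 0)) :=
  (((hh.mono Ioi_subset_Ici_self).aemeasurable measurableSet_Ioi).mul
      ((hf.comp (hΦ.mono Ioi_subset_Ici_self) hΦm).aemeasurable measurableSet_Ioi)).div
    ((hΦ.mono Ioi_subset_Ici_self).aemeasurable measurableSet_Ioi)

namespace IsAdmissibleNonlinearity

variable {f g : ℝ → ℝ} {m : ℝ}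

lemma monotoneOn_Icc (hf : IsAdmissibleNonlinearity f m) : MonotoneOn f (Icc 0 m) := by
  rintro a ⟨ha0, ham⟩ b ⟨hb0, hbm⟩ hab
  rcases ha0.eq_or_lt with rfl | ha0
  · rw [hf.map_zero]
    exact hf.nonneg b hb0
  · exact hf.monotoneOn ⟨ha0, ham⟩ ⟨ha0.trans_le hab, hbm⟩ hab

lemma le_div_mul (hf : IsAdmissibleNonlinearity f m) {a M : ℝ} (ha : 0 ≤ a) (haM : a ≤ M)
    (hMm : M ≤ m) : f a ≤ f M / M * a := by
  rcases ha.eq_or_lt with rfl | ha0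
  · simp [hf.map_zero]
  calc f a = f a / a * a := (div_mul_cancel₀ _ ha0.ne').symm
    _ ≤ f M / M * a := mul_le_mul_of_nonneg_right
        (hf.monotoneOn_div ⟨ha0, haM.trans hMm⟩ ⟨ha0.trans_le haM, hMm⟩ haM) ha

lemma mul_div_nonneg (hf : IsAdmissibleNonlinearity f m) {c M : ℝ} (hc : 0 ≤ c) (hM : 0 ≤ M) :
    0 ≤ c * f M / M :=
  div_nonneg (mul_nonneg hc (hf.nonneg M hM)) hM

variable (hf : IsAdmissibleNonlinearity f m) (hg : IsAdmissibleNonlinearity g m) {h l : ℝ → ℝ}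
include hf hg

lemma continuousOn_add_mul (hh : ContinuousOn h (Ici 0)) (hl : ContinuousOn l (Ici 0)) :
    ContinuousOn (fun p : ℝ × ℝ => h p.1 * f p.2 + l p.1 * g p.2) (Ici 0 ×ˢ Icc 0 m) :=
  ((hh.comp continuousOn_fst fun _ hp => hp.1).mul
      (hf.continuousOn.comp continuousOn_snd fun _ hp => hp.2)).add
    ((hl.comp continuousOn_fst fun _ hp => hp.1).mul
      (hg.continuousOn.comp continuousOn_snd fun _ hp => hp.2))

lemma monotoneOn_add_mul {c₁ c₂ : ℝ} (hc₁ : 0 ≤ c₁) (hc₂ : 0 ≤ c₂) :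
    MonotoneOn (fun a => c₁ * f a + c₂ * g a) (Icc 0 m) := fun _ ha _ hb hab =>
  add_le_add (mul_le_mul_of_nonneg_left (hf.monotoneOn_Icc ha hb hab) hc₁)
    (mul_le_mul_of_nonneg_left (hg.monotoneOn_Icc ha hb hab) hc₂)

lemma add_mul_le {c₁ c₂ : ℝ} (hc₁ : 0 ≤ c₁) (hc₂ : 0 ≤ c₂) {a M : ℝ} (ha : 0 ≤ a) (haM : a ≤ M)
    (hMm : M ≤ m) : c₁ * f a + c₂ * g a ≤ (c₁ * f M / M + c₂ * g M / M) * a := by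
  have h₁ := mul_le_mul_of_nonneg_left (hf.le_div_mul ha haM hMm) hc₁
  have h₂ := mul_le_mul_of_nonneg_left (hg.le_div_mul ha haM hMm) hc₂
  calc c₁ * f a + c₂ * g a ≤ c₁ * (f M / M * a) + c₂ * (g M / M * a) := add_le_add h₁ h₂
    _ = (c₁ * f M / M + c₂ * g M / M) * a := by ring

lemma integrableOn_add_mul_div (hh : ContinuousOn h (Ici 0)) (hl : ContinuousOn l (Ici 0))
    (hh0 : ∀ σ, 0 ≤ σ → 0 ≤ h σ) (hl0 : ∀ σ, 0 ≤ σ → 0 ≤ l σ) {Φ : ℝ → ℝ}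
    (hΦ : ContinuousOn Φ (Ici 0)) (hΦm : MapsTo Φ (Ioi 0) (Icc 0 m)) {c : ℝ} (hc : 0 ≤ c)
    (hcond : (∫⁻ σ in Ioi 0, ENNReal.ofReal (h σ * f (Φ σ) / Φ σ)) +
      (∫⁻ σ in Ioi 0, ENNReal.ofReal (l σ * g (Φ σ) / Φ σ)) ≤ ENNReal.ofReal c) :
    IntegrableOn (fun σ => h σ * f (Φ σ) / Φ σ + l σ * g (Φ σ) / Φ σ) (Ioi 0) ∧
      ∫ σ in Ioi 0, (h σ * f (Φ σ) / Φ σ + l σ * g (Φ σ) / Φ σ) ≤ c :=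
  integrable_add_and_integral_le (aemeasurable_mul_comp_div hh hf.continuousOn hΦ hΦm)
    (aemeasurable_mul_comp_div hl hg.continuousOn hΦ hΦm)
    (ae_restrict_of_forall_mem measurableSet_Ioi fun σ hσ =>
      hf.mul_div_nonneg (hh0 σ (le_of_lt hσ)) (hΦm hσ).1)
    (ae_restrict_of_forall_mem measurableSet_Ioi fun σ hσ =>
      hg.mul_div_nonneg (hl0 σ (le_of_lt hσ)) (hΦm hσ).1) hc hcond

end IsAdmissibleNonlinearity

lemma mul_one_add_le_one_of_lt {β δ c : ℝ} (hβ : 0 < β + 1) (hδ : δ < 1 / (β + 1) * min 1 c) :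
    δ * (1 + β) ≤ 1 := by
  have h1 : δ < 1 / (β + 1) :=
    hδ.trans_le (mul_le_of_le_one_right (by positivity) (min_le_left _ _))
  rw [lt_div_iff₀ hβ] at h1
  linarith

theorem monotone_iteration_bound_general
    (N : ℕ) (α : ℝ)
    (Γ : EucN N → EucN N → ℝ → ℝ)
    (hΓmeas : Measurable fun p : EucN N × EucN N × ℝ => Γ p.1 p.2.1 p.2.2)
    (c₀ : ℝ)
    (hK1y : ∀ (x : EucN N) (t : ℝ), 0 < t → ∫ y, Γ x y t = 1)
    (hK2 : ∀ (x y : EucN N) (s t : ℝ), 0 < s → s < t →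
      Γ x y t = ∫ ξ, Γ x ξ (t - s) * Γ ξ y s)
    (hK5 : ∀ (x y : EucN N) (t : ℝ), 0 < t →
      0 < Γ x y t ∧ Γ x y t ≤ c₀ * t ^ (-(N : ℝ) / (2 - α)))
    (S : ℝ → CbN N → CbN N)
    (hSΓ : ∀ (φ : CbN N) (t : ℝ), 0 < t → ∀ x, S t φ x = ∫ y, Γ x y t * φ y)
    (hK4 : ∀ φ : CbN N, ContinuousOn (fun t => S t φ) (Ici (0 : ℝ)))
    (h l : ℝ → ℝ)
    (hhcont : ContinuousOn h (Ici 0)) (hlcont : ContinuousOn l (Ici 0))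
    (hhnn : ∀ t, 0 ≤ t → 0 ≤ h t) (hlnn : ∀ t, 0 ≤ t → 0 ≤ l t)
    (f g : ℝ → ℝ)
    (hfLip : ∀ M > (0 : ℝ), ∃ K : NNReal, LipschitzOnWith K f (Icc 0 M))
    (hgLip : ∀ M > (0 : ℝ), ∃ K : NNReal, LipschitzOnWith K g (Icc 0 M))
    (hfnn : ∀ s, 0 ≤ s → 0 ≤ f s) (hgnn : ∀ s, 0 ≤ s → 0 ≤ g s)
    (hf0 : f 0 = 0) (hg0 : g 0 = 0)
    (m : ℝ) (hm : 0 < m)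
    (hfmono : MonotoneOn f (Ioc 0 m)) (hgmono : MonotoneOn g (Ioc 0 m))
    (hfqmono : MonotoneOn (fun s => f s / s) (Ioc 0 m))
    (hgqmono : MonotoneOn (fun s => g s / s) (Ioc 0 m))
    (v₀ : CbN N) (hv₀nn : ∀ x, 0 ≤ v₀ x) (hv₀m : ‖v₀‖ ≤ m)
    (β : ℝ) (hβ : 0 < β)
    (hβcond :
      (∫⁻ σ in Ioi (0 : ℝ), ENNReal.ofReal (h σ * f ‖S σ v₀‖ / ‖S σ v₀‖)) +
      (∫⁻ σ in Ioi (0 : ℝ), ENNReal.ofReal (l σ * g ‖S σ v₀‖ / ‖S σ v₀‖))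
        ≤ ENNReal.ofReal (β / (β + 1)))
    (δ : ℝ) (hδ0 : 0 < δ)
    (hδ : δ < (1 / (β + 1)) * min 1 (m / ‖v₀‖))
    -- the Picard iterates with initial data `u₀ = δ v₀`
    (u : ℕ → ℝ → EucN N → ℝ)
    (hiter0 : ∀ t > (0 : ℝ), ∀ x, u 0 t x = S t (δ • v₀) x)
    (hiter : ∀ k : ℕ, ∀ t > (0 : ℝ), ∀ x,
      u (k + 1) t x = S t (δ • v₀) x +
        ∫ σ in (0 : ℝ)..t, ∫ y, Γ x y (t - σ) *
          (h σ * f (u k σ y) + l σ * g (u k σ y))) :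
    ∀ k : ℕ, ∀ t > (0 : ℝ), ∀ x,
      0 ≤ u k t x ∧ u k t x ≤ u (k + 1) t x ∧
        u (k + 1) t x ≤ (1 + β) * S t (δ • v₀) x := by
  have hΓ : IsHeatKernel volume Γ := ⟨hΓmeas, fun x y t ht => (hK5 x y t ht).1.le, hK1y, hK2⟩
  have hf : IsAdmissibleNonlinearity f m :=
    ⟨(hfLip m hm).choose_spec.continuousOn, hfnn, hf0, hfmono, hfqmono⟩
  have hg : IsAdmissibleNonlinearity g m :=
    ⟨(hgLip m hm).choose_spec.continuousOn, hgnn, hg0, hgmono, hgqmono⟩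
  have hδβ : δ * (1 + β) ≤ 1 := mul_one_add_le_one_of_lt (by linarith) hδ
  have hB : (1 + β) * (δ * ‖v₀‖) ≤ m := by nlinarith [norm_nonneg v₀]
  have hΦ : MapsTo (fun σ => ‖S σ v₀‖) (Ioi 0) (Icc 0 m) := fun σ hσ =>
    ⟨norm_nonneg _, (hΓ.norm_le hσ hv₀nn (hSΓ v₀ σ hσ)).trans hv₀m⟩
  have hū := fun σ (hσ : 0 < σ) y =>
    hΓ.mul_heatOp_smul_mem_Icc hσ hv₀nn (hSΓ v₀ σ hσ) (by linarith) hδ0.le hδβ y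
  obtain ⟨hq, hqβ⟩ := hf.integrableOn_add_mul_div hg hhcont hlcont hhnn hlnn (hK4 v₀).norm hΦ
    (by positivity) hβcond
  have hS := fun t ht x => hSΓ (δ • v₀) t ht x
  intro k t ht x
  rw [hS t ht x]
  exact hΓ.monotone_picard_iterates (φ := ⇑(δ • v₀)) (F := fun σ a => h σ * f a + l σ * g a)
    (fun y => mul_nonneg hδ0.le (hv₀nn y))
    (fun y => mul_le_mul_of_nonneg_left (v₀.apply_le_norm y) hδ0.le) (by positivity)
    (fun σ hσ => (hf.monotoneOn_add_mul hg (hhnn σ hσ.le) (hlnn σ hσ.le)).mono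
      (Icc_subset_Icc_right hB))
    (fun σ _ => by simp [hf0, hg0])
    (fun σ hσ y => hf.add_mul_le hg (hhnn σ hσ.le) (hlnn σ hσ.le) (hū σ hσ y).1 (hū σ hσ y).2
      (hΦ hσ).2)
    (δ • v₀).continuous.measurable hq
    (fun σ hσ => add_nonneg (hf.mul_div_nonneg (hhnn σ hσ.le) (norm_nonneg _))
      (hg.mul_div_nonneg (hlnn σ hσ.le) (norm_nonneg _)))
    ((hf.continuousOn_add_mul hg hhcont hlcont).mono
      (prod_mono Ioi_subset_Ici_self (Icc_subset_Icc_right hB))) hqβ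
    (fun t ht x => (hiter0 t ht x).trans (hS t ht x))
    (fun k t ht x => by rw [hiter k t ht x, hS t ht x]; rfl) k ht x

/-- Monotone iteration bound (3.1) in the proof of Theorem 1.2(i):
the Picard iterates are nonnegative, nondecreasing in `k`, and bounded by
`(1+β) S(t) u₀`. -/
theorem monotone_iteration_bound
    (N : ℕ) (hN : 1 ≤ N) (α : ℝ) (hα0 : 0 ≤ α) (hα1 : α < 1)
    (Γ : EucN N → EucN N → ℝ → ℝ)
    (hΓmeas : Measurable fun p : EucN N × EucN N × ℝ => Γ p.1 p.2.1 p.2.2)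
    (c₀ : ℝ) (hc₀ : 0 < c₀)
    (hK1y : ∀ (x : EucN N) (t : ℝ), 0 < t → ∫ y, Γ x y t = 1)
    (hK1x : ∀ (y : EucN N) (t : ℝ), 0 < t → ∫ x, Γ x y t = 1)
    (hK2 : ∀ (x y : EucN N) (s t : ℝ), 0 < s → s < t →
      Γ x y t = ∫ ξ, Γ x ξ (t - s) * Γ ξ y s)
    (hK5 : ∀ (x y : EucN N) (t : ℝ), 0 < t →
      0 < Γ x y t ∧ Γ x y t ≤ c₀ * t ^ (-(N : ℝ) / (2 - α)))
    (S : ℝ → CbN N → CbN N)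
    (hS0 : ∀ φ, S 0 φ = φ)
    (hSΓ : ∀ (φ : CbN N) (t : ℝ), 0 < t → ∀ x, S t φ x = ∫ y, Γ x y t * φ y)
    (hK4 : ∀ φ : CbN N, ContinuousOn (fun t => S t φ) (Ici (0 : ℝ)))
    (h l : ℝ → ℝ)
    (hhcont : ContinuousOn h (Ici 0)) (hlcont : ContinuousOn l (Ici 0))
    (hhnn : ∀ t, 0 ≤ t → 0 ≤ h t) (hlnn : ∀ t, 0 ≤ t → 0 ≤ l t)
    (f g : ℝ → ℝ)
    (hfLip : ∀ M > (0 : ℝ), ∃ K : NNReal, LipschitzOnWith K f (Icc 0 M))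
    (hgLip : ∀ M > (0 : ℝ), ∃ K : NNReal, LipschitzOnWith K g (Icc 0 M))
    (hfnn : ∀ s, 0 ≤ s → 0 ≤ f s) (hgnn : ∀ s, 0 ≤ s → 0 ≤ g s)
    (hf0 : f 0 = 0) (hg0 : g 0 = 0)
    (m : ℝ) (hm : 0 < m)
    (hfmono : MonotoneOn f (Ioc 0 m)) (hgmono : MonotoneOn g (Ioc 0 m))
    (hfqmono : MonotoneOn (fun s => f s / s) (Ioc 0 m))
    (hgqmono : MonotoneOn (fun s => g s / s) (Ioc 0 m))
    (v₀ : CbN N) (hv₀nn : ∀ x, 0 ≤ v₀ x) (hv₀ne : v₀ ≠ 0) (hv₀m : ‖v₀‖ ≤ m)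
    (β : ℝ) (hβ : 0 < β)
    (hβcond :
      (∫⁻ σ in Ioi (0 : ℝ), ENNReal.ofReal (h σ * f ‖S σ v₀‖ / ‖S σ v₀‖)) +
      (∫⁻ σ in Ioi (0 : ℝ), ENNReal.ofReal (l σ * g ‖S σ v₀‖ / ‖S σ v₀‖))
        ≤ ENNReal.ofReal (β / (β + 1)))
    (δ : ℝ) (hδ0 : 0 < δ)
    (hδ : δ < (1 / (β + 1)) * min 1 (m / ‖v₀‖))
    -- the Picard iterates with initial data `u₀ = δ v₀`
    (u : ℕ → ℝ → EucN N → ℝ)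
    (hiter0 : ∀ t > (0 : ℝ), ∀ x, u 0 t x = S t (δ • v₀) x)
    (hiter : ∀ k : ℕ, ∀ t > (0 : ℝ), ∀ x,
      u (k + 1) t x = S t (δ • v₀) x +
        ∫ σ in (0 : ℝ)..t, ∫ y, Γ x y (t - σ) *
          (h σ * f (u k σ y) + l σ * g (u k σ y))) :
    ∀ k : ℕ, ∀ t > (0 : ℝ), ∀ x,
      0 ≤ u k t x ∧ u k t x ≤ u (k + 1) t x ∧
        u (k + 1) t x ≤ (1 + β) * S t (δ • v₀) x :=
  monotone_iteration_bound_general N α Γ hΓmeas c₀ hK1y hK2 hK5 S hSΓ hK4 h l hhcont hlcont hhnn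
    hlnn f g hfLip hgLip hfnn hgnn hf0 hg0 m hm hfmono hgmono hfqmono hgqmono v₀ hv₀nn hv₀m β hβ
    hβcond δ hδ0 hδ u hiter0 hiter
end
end

section
/- (Theorem 1.1(i), Fujita exponent for the pure power equation, after Fujishima et al.) Consider problem (P) with h ≡ 1, l ≡ 0, f(u) = u^p and g ≡ 0, i.e. the equation u_t − div(ω(x)∇u) = u^p. If 1 < p ≤ 1 + (2−α)/N, then problem (P) has no nontrivial global solution: for every nonnegative u₀ ∈ C_b(ℝ^N) with u₀ ≢ 0 there is no global solution with initial data u₀. -/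
/-! A nonzero solution is bounded below by `c t^(-N/(2-α))` on the parabolic region
`‖x‖ ≤ t^(1/(2-α))`, by the kernel lower bound applied to `u₀`. Fed into the Duhamel term, this
bound gains a factor `log (t / T₀) = ∫ dσ / σ` precisely because `p ≤ 1 + (2-α)/N`, so on some
time window `[2T, 4T]` the solution exceeds a `d₀` with `T d₀^(p-1)` as large as we like.
On cylinders of width `δ = T / 2^(k+1)` the Duhamel formula turns a lower bound `e` into
`κ δ e^p`; this superlinear recursion makes the bounds grow like `2^(k/(p-1))` at the fixed
point `(4T, 0)`, which is absurd. -/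

open MeasureTheory Real Set Metric Filter

noncomputable section

/-- `u` is a global (mild) solution of problem (P)
`u_t - div(ω(x)∇u) = h(t) f(u) + l(t) g(u)`, `u(0) = u₀`, i.e.
`u ∈ C([0,∞), C_b(ℝ^N))`, `u ≥ 0`, and
`u(t) = S(t)u₀ + ∫_0^t S(t-σ)[h(σ) f(u(σ)) + l(σ) g(u(σ))] dσ` for all `t ≥ 0`,
written pointwise via the kernel `Γ`. -/
def IsGlobalSolution (N : ℕ) (Γ : EucN N → EucN N → ℝ → ℝ)
    (h l f g : ℝ → ℝ) (u₀ : CbN N) (u : ℝ → CbN N) : Prop :=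
  ContinuousOn u (Ici (0 : ℝ)) ∧ u 0 = u₀ ∧
    (∀ t : ℝ, 0 ≤ t → ∀ x, 0 ≤ u t x) ∧
    ∀ t : ℝ, 0 < t → ∀ x,
      u t x = (∫ y, Γ x y t * u₀ y) +
        ∫ σ in (0 : ℝ)..t, ∫ y, Γ x y (t - σ) *
          (h σ * f (u σ y) + l σ * g (u σ y))

namespace BoundedContinuousFunction

variable {α : Type*} [TopologicalSpace α]

protected def rpow (f : α →ᵇ ℝ) (p : ℝ) (hp : 0 ≤ p) : α →ᵇ ℝ :=
  ofNormedAddCommGroup (fun x => f x ^ p) (f.continuous.rpow_const fun _ => Or.inr hp) (‖f‖ ^ p)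
    fun x => by
      rw [Real.norm_eq_abs]
      exact (abs_rpow_le_abs_rpow _ _).trans
        (rpow_le_rpow (abs_nonneg _) (f.norm_coe_le_norm x) hp)

@[simp]
theorem rpow_apply (f : α →ᵇ ℝ) (p : ℝ) (hp : 0 ≤ p) (x : α) : f.rpow p hp x = f x ^ p := rfl

end BoundedContinuousFunction

def unitBallVolume (N : ℕ) : ℝ := volume.real (closedBall (0 : EucN N) 1)

theorem unitBallVolume_pos (N : ℕ) : 0 < unitBallVolume N :=
  ENNReal.toReal_pos (measure_closedBall_pos volume 0 one_pos).ne' measure_closedBall_lt_top.ne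

theorem volume_real_closedBall_rpow {N : ℕ} {b β : ℝ} (hb : 0 < b) (hβ : 0 ≤ β) :
    volume.real (closedBall (0 : EucN N) (β ^ (1 / b))) = β ^ ((N : ℝ) / b) * unitBallVolume N := by
  rw [unitBallVolume, Measure.addHaar_real_closedBall' _ _ (by positivity),
    finrank_euclideanSpace_fin, ← rpow_natCast, ← rpow_mul hβ]
  congr 2
  field_simp

theorem exists_pos_eventually_le_setIntegral_closedBall {E : Type*} [NormedAddCommGroup E]
    [MeasurableSpace E] [BorelSpace E] [ProperSpace E] {μ : Measure E}
    [IsFiniteMeasureOnCompacts μ] [μ.IsOpenPosMeasure] {f : E → ℝ} (hf : Continuous f)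
    (hf₀ : ∀ x, 0 ≤ f x) (hne : f ≠ 0) :
    ∃ m > 0, ∀ᶠ ρ in atTop, m ≤ ∫ y in closedBall 0 ρ, f y ∂μ := by
  obtain ⟨x₀, hx₀⟩ := Function.ne_iff.1 hne
  have hint : ∀ ρ, IntegrableOn f (closedBall 0 ρ) μ := fun ρ =>
    hf.continuousOn.integrableOn_compact (isCompact_closedBall 0 ρ)
  refine ⟨∫ y in closedBall 0 (‖x₀‖ + 1), f y ∂μ, ?_, ?_⟩
  · show 0 < _
    rw [setIntegral_pos_iff_support_of_nonneg_ae (.of_forall hf₀) (hint _)]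
    exact (((isOpen_compl_singleton.preimage hf).inter isOpen_ball).measure_pos μ
      ⟨x₀, hx₀, by simp⟩).trans_le
        (measure_mono (inter_subset_inter_right _ ball_subset_closedBall))
  · filter_upwards [eventually_ge_atTop (‖x₀‖ + 1)] with ρ hρ
    exact setIntegral_mono_set (hint ρ) (.of_forall hf₀)
      (closedBall_subset_closedBall hρ).eventuallyLE

structure IsTransitionDensity {N : ℕ} (Γ : EucN N → EucN N → ℝ → ℝ) : Prop where
  measurable : Measurable fun q : EucN N × EucN N × ℝ => Γ q.1 q.2.1 q.2.2
  nonneg : ∀ x y t, 0 < t → 0 ≤ Γ x y t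
  integral_eq_one : ∀ x t, 0 < t → ∫ y, Γ x y t = 1

namespace IsTransitionDensity

variable {N : ℕ} {Γ : EucN N → EucN N → ℝ → ℝ} {φ : EucN N → ℝ} {t : ℝ}

theorem integral_mul_nonneg (hΓ : IsTransitionDensity Γ) (hφ : ∀ y, 0 ≤ φ y) (ht : 0 < t)
    (x : EucN N) : 0 ≤ ∫ y, Γ x y t * φ y :=
  integral_nonneg fun y => mul_nonneg (hΓ.nonneg x y t ht) (hφ y)

theorem integral_mul_le (hΓ : IsTransitionDensity Γ) (hφ : ∀ y, 0 ≤ φ y) {M : ℝ}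
    (hφM : ∀ y, φ y ≤ M) (ht : 0 < t) (x : EucN N) : ∫ y, Γ x y t * φ y ≤ M := by
  have hint : Integrable fun y => Γ x y t :=
    .of_integral_ne_zero (by simp [hΓ.integral_eq_one x t ht])
  calc ∫ y, Γ x y t * φ y ≤ ∫ y, Γ x y t * M :=
        integral_mono_of_nonneg (.of_forall fun y => mul_nonneg (hΓ.nonneg x y t ht) (hφ y))
          (hint.mul_const M)
          (.of_forall fun y => mul_le_mul_of_nonneg_left (hφM y) (hΓ.nonneg x y t ht))
    _ = M := by rw [integral_mul_const, hΓ.integral_eq_one x t ht, one_mul]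

end IsTransitionDensity

def KernelLowerBound {N : ℕ} (Γ : EucN N → EucN N → ℝ → ℝ) (b C : ℝ) : Prop :=
  ∀ φ : CbN N, (∀ x, 0 ≤ φ x) → ∀ t > (0 : ℝ), ∀ x : EucN N, ‖x‖ ≤ t ^ ((1 : ℝ) / b) →
    C⁻¹ * t ^ (-(N : ℝ) / b) * (∫ y in closedBall (0 : EucN N) (t ^ ((1 : ℝ) / b)), φ y) ≤
      ∫ y, Γ x y t * φ y

namespace KernelLowerBound

variable {N : ℕ} {Γ : EucN N → EucN N → ℝ → ℝ} {b C β t R e : ℝ} {x : EucN N}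

theorem le_integral_of_le_on_closedBall (hΓ : KernelLowerBound Γ b C) (hb : 0 < b) (hC : 0 < C)
    {φ : CbN N} (hφ : ∀ y, 0 ≤ φ y) (hβ : 0 < β) (hβt : β ≤ t) (htR : t ≤ R) (he : 0 ≤ e)
    (hφe : ∀ y ∈ closedBall (0 : EucN N) (β ^ (1 / b)), e ≤ φ y) (hx : ‖x‖ ≤ t ^ (1 / b)) :
    C⁻¹ * R ^ (-(N : ℝ) / b) * (β ^ ((N : ℝ) / b) * unitBallVolume N * e) ≤
      ∫ y, Γ x y t * φ y := by
  have ht : 0 < t := hβ.trans_le hβt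
  have hsub : closedBall (0 : EucN N) (β ^ (1 / b)) ⊆ closedBall 0 (t ^ (1 / b)) :=
    closedBall_subset_closedBall (rpow_le_rpow hβ.le hβt (by positivity))
  have hint : IntegrableOn φ (closedBall (0 : EucN N) (t ^ (1 / b))) :=
    φ.continuous.continuousOn.integrableOn_compact (isCompact_closedBall _ _)
  have hV := unitBallVolume_pos N
  calc C⁻¹ * R ^ (-(N : ℝ) / b) * (β ^ ((N : ℝ) / b) * unitBallVolume N * e)
      ≤ C⁻¹ * t ^ (-(N : ℝ) / b) * (β ^ ((N : ℝ) / b) * unitBallVolume N * e) := by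
        refine mul_le_mul_of_nonneg_right (mul_le_mul_of_nonneg_left ?_ (by positivity))
          (by positivity)
        exact rpow_le_rpow_of_nonpos ht htR
          (div_nonpos_of_nonpos_of_nonneg (neg_nonpos.2 N.cast_nonneg) hb.le)
    _ = C⁻¹ * t ^ (-(N : ℝ) / b) * ∫ _ in closedBall (0 : EucN N) (β ^ (1 / b)), e := by
        rw [setIntegral_const, volume_real_closedBall_rpow hb hβ.le, smul_eq_mul]
    _ ≤ C⁻¹ * t ^ (-(N : ℝ) / b) * ∫ y in closedBall (0 : EucN N) (β ^ (1 / b)), φ y := by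
        refine mul_le_mul_of_nonneg_left ?_ (by positivity)
        exact setIntegral_mono_on (integrableOn_const measure_closedBall_lt_top.ne)
          (hint.mono_set hsub) measurableSet_closedBall hφe
    _ ≤ C⁻¹ * t ^ (-(N : ℝ) / b) * ∫ y in closedBall (0 : EucN N) (t ^ (1 / b)), φ y := by
        refine mul_le_mul_of_nonneg_left ?_ (by positivity)
        exact setIntegral_mono_set hint (.of_forall hφ) hsub.eventuallyLE
    _ ≤ ∫ y, Γ x y t * φ y := hΓ φ hφ t ht x hx

theorem le_integral_rpow_of_le_on_closedBall (hΓ : KernelLowerBound Γ b C) (hb : 0 < b)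
    (hC : 0 < C) {f : CbN N} (hf : ∀ y, 0 ≤ f y) {p : ℝ} (hp : 0 ≤ p) (hβ : 0 < β)
    (hβt : β ≤ t) (htR : t ≤ R) (he : 0 ≤ e)
    (hfe : ∀ y ∈ closedBall (0 : EucN N) (β ^ (1 / b)), e ≤ f y) (hx : ‖x‖ ≤ t ^ (1 / b)) :
    C⁻¹ * R ^ (-(N : ℝ) / b) * (β ^ ((N : ℝ) / b) * unitBallVolume N * e ^ p) ≤
      ∫ y, Γ x y t * f y ^ p :=
  hΓ.le_integral_of_le_on_closedBall (φ := f.rpow p hp) hb hC (fun y => rpow_nonneg (hf y) p)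
    hβ hβt htR (rpow_nonneg he p) (fun y hy => rpow_le_rpow he (hfe y hy) hp) hx

end KernelLowerBound

abbrev IsGlobalPowerSolution (N : ℕ) (Γ : EucN N → EucN N → ℝ → ℝ) (p : ℝ) (u₀ : CbN N)
    (u : ℝ → CbN N) : Prop :=
  IsGlobalSolution N Γ (fun _ => 1) (fun _ => 0) (fun z => z ^ p) (fun _ => 0) u₀ u

namespace IsGlobalPowerSolution

variable {N : ℕ} {Γ : EucN N → EucN N → ℝ → ℝ} {p b C : ℝ} {u₀ : CbN N} {u : ℝ → CbN N}
  {τ : ℝ}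

theorem eq_duhamel (hu : IsGlobalPowerSolution N Γ p u₀ u) (hτ : 0 < τ) (x : EucN N) :
    u τ x = (∫ y, Γ x y τ * u₀ y) + ∫ σ in (0 : ℝ)..τ, ∫ y, Γ x y (τ - σ) * u σ y ^ p := by
  simpa using hu.2.2.2 τ hτ x

theorem duhamelIntegrand_nonneg (hu : IsGlobalPowerSolution N Γ p u₀ u)
    (hΓ : IsTransitionDensity Γ) {σ : ℝ} (hσ : σ ∈ Ico 0 τ) (x : EucN N) :
    0 ≤ ∫ y, Γ x y (τ - σ) * u σ y ^ p :=
  hΓ.integral_mul_nonneg (fun y => rpow_nonneg (hu.2.2.1 σ hσ.1 y) p) (by linarith [hσ.2]) x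

theorem integrableOn_duhamelIntegrand (hu : IsGlobalPowerSolution N Γ p u₀ u)
    (hΓ : IsTransitionDensity Γ) (hp : 0 ≤ p) (x : EucN N) :
    IntegrableOn (fun σ => ∫ y, Γ x y (τ - σ) * u σ y ^ p) (Ioo 0 τ) := by
  have hu_cont : ContinuousOn (fun q : ℝ × EucN N => u q.1 q.2 ^ p) (Ioo 0 τ ×ˢ univ) := by
    have hu' : ContinuousOn u (Ioo 0 τ) := hu.1.mono fun σ hσ => le_of_lt hσ.1
    have hpair : ContinuousOn (fun q : ℝ × EucN N => (u q.1, q.2)) (Ioo 0 τ ×ˢ univ) :=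
      (hu'.comp continuousOn_fst fun q hq => hq.1).prodMk continuousOn_snd
    exact (continuous_eval.comp_continuousOn hpair).rpow_const fun _ _ => Or.inr hp
  have hmeas : AEStronglyMeasurable (fun σ => ∫ y, Γ x y (τ - σ) * u σ y ^ p)
      (volume.restrict (Ioo 0 τ)) := by
    refine AEStronglyMeasurable.integral_prod_right' (f := fun q : ℝ × EucN N =>
      Γ x q.2 (τ - q.1) * u q.1 q.2 ^ p) ?_
    refine (hΓ.measurable.comp (measurable_const.prodMk (measurable_snd.prodMk
      (measurable_const.sub measurable_fst)))).aestronglyMeasurable.mul ?_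
    rw [← Measure.restrict_univ (μ := (volume : Measure (EucN N))), Measure.prod_restrict]
    exact hu_cont.aestronglyMeasurable (measurableSet_Ioo.prod .univ)
  obtain ⟨M, hM⟩ := isCompact_Icc.exists_bound_of_continuousOn
    (hu.1.mono fun σ (hσ : σ ∈ Icc 0 τ) => hσ.1)
  refine Integrable.mono' (integrableOn_const (C := M ^ p) measure_Ioo_lt_top.ne) hmeas
    ((ae_restrict_mem measurableSet_Ioo).mono fun σ hσ => ?_)
  have hσ' : σ ∈ Ico 0 τ := Ioo_subset_Ico_self hσ
  rw [Real.norm_eq_abs, abs_of_nonneg (hu.duhamelIntegrand_nonneg hΓ hσ' x)]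
  refine hΓ.integral_mul_le (fun y => rpow_nonneg (hu.2.2.1 σ hσ'.1 y) p)
    (fun y => rpow_le_rpow (hu.2.2.1 σ hσ'.1 y) ?_ hp) (by linarith [hσ.2]) x
  exact (le_abs_self _).trans (((u σ).norm_coe_le_norm y).trans (hM σ (Ioo_subset_Icc_self hσ)))

theorem integral_duhamelIntegrand_le (hu : IsGlobalPowerSolution N Γ p u₀ u)
    (hΓ : IsTransitionDensity Γ) (hu₀ : ∀ x, 0 ≤ u₀ x) (hτ : 0 < τ) (x : EucN N) :
    ∫ σ in (0 : ℝ)..τ, ∫ y, Γ x y (τ - σ) * u σ y ^ p ≤ u τ x := by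
  rw [hu.eq_duhamel hτ x]
  linarith [hΓ.integral_mul_nonneg hu₀ hτ x]

theorem integral_kernel_mul_initial_le (hu : IsGlobalPowerSolution N Γ p u₀ u)
    (hΓ : IsTransitionDensity Γ) (hτ : 0 < τ) (x : EucN N) :
    ∫ y, Γ x y τ * u₀ y ≤ u τ x := by
  have hD : 0 ≤ ∫ σ in (0 : ℝ)..τ, ∫ y, Γ x y (τ - σ) * u σ y ^ p := by
    rw [intervalIntegral.integral_of_le hτ.le, integral_Ioc_eq_integral_Ioo]
    exact setIntegral_nonneg measurableSet_Ioo fun σ hσ =>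
      hu.duhamelIntegrand_nonneg hΓ (Ioo_subset_Ico_self hσ) x
  rw [hu.eq_duhamel hτ x]
  linarith

theorem setIntegral_le (hu : IsGlobalPowerSolution N Γ p u₀ u) (hΓ : IsTransitionDensity Γ)
    (hp : 0 ≤ p) (hu₀ : ∀ x, 0 ≤ u₀ x) {x : EucN N} {b₁ b₂ : ℝ} (hb₁ : 0 ≤ b₁) (hb : b₁ ≤ b₂)
    (hb₂ : b₂ < τ) {g : ℝ → ℝ} (hg : IntegrableOn g (Ioc b₁ b₂))
    (hgF : ∀ σ ∈ Ioc b₁ b₂, g σ ≤ ∫ y, Γ x y (τ - σ) * u σ y ^ p) :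
    ∫ σ in Ioc b₁ b₂, g σ ≤ u τ x := by
  have hτ : 0 < τ := by linarith
  have hsub : Ioc b₁ b₂ ⊆ Ioo 0 τ := fun σ hσ => ⟨by linarith [hσ.1], by linarith [hσ.2]⟩
  have hF := hu.integrableOn_duhamelIntegrand hΓ hp x (τ := τ)
  calc ∫ σ in Ioc b₁ b₂, g σ ≤ ∫ σ in Ioc b₁ b₂, ∫ y, Γ x y (τ - σ) * u σ y ^ p :=
        setIntegral_mono_on hg (hF.mono_set hsub) measurableSet_Ioc hgF
    _ ≤ ∫ σ in Ioo 0 τ, ∫ y, Γ x y (τ - σ) * u σ y ^ p :=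
        setIntegral_mono_set hF ((ae_restrict_mem measurableSet_Ioo).mono fun σ hσ =>
          hu.duhamelIntegrand_nonneg hΓ (Ioo_subset_Ico_self hσ) x) hsub.eventuallyLE
    _ = ∫ σ in (0 : ℝ)..τ, ∫ y, Γ x y (τ - σ) * u σ y ^ p := by
        rw [intervalIntegral.integral_of_le hτ.le, integral_Ioc_eq_integral_Ioo]
    _ ≤ u τ x := hu.integral_duhamelIntegrand_le hΓ hu₀ hτ x

theorem exists_initial_lower_bound (hu : IsGlobalPowerSolution N Γ p u₀ u)
    (hΓ : IsTransitionDensity Γ) (hΓl : KernelLowerBound Γ b C) (hb : 0 < b) (hC : 0 < C)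
    (hu₀ : ∀ x, 0 ≤ u₀ x) (hu₀ne : u₀ ≠ 0) :
    ∃ m > 0, ∃ T₀ ≥ 1, ∀ σ ≥ T₀, ∀ y ∈ closedBall (0 : EucN N) (σ ^ (1 / b)),
      C⁻¹ * σ ^ (-(N : ℝ) / b) * m ≤ u σ y := by
  obtain ⟨m, hm, hev⟩ := exists_pos_eventually_le_setIntegral_closedBall (μ := volume)
    u₀.continuous hu₀ fun h => hu₀ne (BoundedContinuousFunction.ext (congrFun h))
  obtain ⟨T₀, hT₀⟩ := eventually_atTop.1
    (((tendsto_rpow_atTop (one_div_pos.2 hb)).eventually hev).and (eventually_ge_atTop 1))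
  refine ⟨m, hm, T₀, (hT₀ T₀ le_rfl).2, fun σ hσ y hy => ?_⟩
  have hσ0 : 0 < σ := by linarith [(hT₀ σ hσ).2]
  calc C⁻¹ * σ ^ (-(N : ℝ) / b) * m
      ≤ C⁻¹ * σ ^ (-(N : ℝ) / b) * ∫ z in closedBall (0 : EucN N) (σ ^ (1 / b)), u₀ z :=
        mul_le_mul_of_nonneg_left (hT₀ σ hσ).1 (by positivity)
    _ ≤ ∫ z, Γ y z σ * u₀ z := hΓl u₀ hu₀ σ hσ0 y (mem_closedBall_zero_iff.1 hy)
    _ ≤ u σ y := hu.integral_kernel_mul_initial_le hΓ hσ0 y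

theorem mul_inv_le_duhamelIntegrand (hu : IsGlobalPowerSolution N Γ p u₀ u)
    (hΓl : KernelLowerBound Γ b C) (hb : 0 < b) (hC : 0 < C) (hp : 1 < p)
    (hcrit : N / b * (p - 1) ≤ 1) {m σ t : ℝ} (hm : 0 ≤ m) (hσ : 1 ≤ σ) (hσt : σ ≤ t)
    (hσm : ∀ y ∈ closedBall (0 : EucN N) (σ ^ (1 / b)), C⁻¹ * σ ^ (-(N : ℝ) / b) * m ≤ u σ y)
    {x : EucN N} (hx : ‖x‖ ≤ t ^ (1 / b)) :
    C⁻¹ * 2 ^ (-(N : ℝ) / b) * unitBallVolume N * (C⁻¹ * m) ^ p * t ^ (-(N : ℝ) / b) * σ⁻¹ ≤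
      ∫ y, Γ x y (2 * t - σ) * u σ y ^ p := by
  have hσ0 : 0 < σ := by linarith
  have ht0 : 0 < t := by linarith
  have hV := unitBallVolume_pos N
  have hlow := hΓl.le_integral_rpow_of_le_on_closedBall hb hC (hu.2.2.1 σ hσ0.le)
    (by linarith : 0 ≤ p) hσ0 (t := 2 * t - σ) (R := 2 * t) (by linarith) (by linarith)
    (by positivity) hσm (hx.trans (rpow_le_rpow ht0.le (by linarith) (by positivity)))
  have hσpow : σ ^ ((N : ℝ) / b) * (C⁻¹ * σ ^ (-(N : ℝ) / b) * m) ^ p =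
      (C⁻¹ * m) ^ p * σ ^ ((N : ℝ) / b * (1 - p)) := by
    rw [show C⁻¹ * σ ^ (-(N : ℝ) / b) * m = (C⁻¹ * m) * σ ^ (-(N : ℝ) / b) by ring,
      mul_rpow (by positivity) (by positivity), ← rpow_mul hσ0.le, mul_left_comm,
      ← rpow_add hσ0]
    congr 2
    ring
  calc C⁻¹ * 2 ^ (-(N : ℝ) / b) * unitBallVolume N * (C⁻¹ * m) ^ p * t ^ (-(N : ℝ) / b) * σ⁻¹
      ≤ C⁻¹ * 2 ^ (-(N : ℝ) / b) * unitBallVolume N * (C⁻¹ * m) ^ p * t ^ (-(N : ℝ) / b) *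
          σ ^ ((N : ℝ) / b * (1 - p)) := by
        -- the critical exponent makes `σ ^ (N / b * (1 - p))` dominate `σ⁻¹`
        refine mul_le_mul_of_nonneg_left ?_ (by positivity)
        rw [← rpow_neg_one]
        exact rpow_le_rpow_of_exponent_le hσ (by nlinarith)
    _ = C⁻¹ * (2 * t) ^ (-(N : ℝ) / b) *
          (σ ^ ((N : ℝ) / b) * unitBallVolume N * (C⁻¹ * σ ^ (-(N : ℝ) / b) * m) ^ p) := by
        rw [mul_rpow zero_le_two (by linarith), show ∀ A B : ℝ, σ ^ ((N : ℝ) / b) * A * B =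
          A * (σ ^ ((N : ℝ) / b) * B) from fun A B => by ring, hσpow]
        ring
    _ ≤ _ := hlow

theorem mul_log_div_le (hu : IsGlobalPowerSolution N Γ p u₀ u) (hΓ : IsTransitionDensity Γ)
    (hΓl : KernelLowerBound Γ b C) (hb : 0 < b) (hC : 0 < C) (hp : 1 < p)
    (hcrit : N / b * (p - 1) ≤ 1) (hu₀ : ∀ x, 0 ≤ u₀ x) {m T₀ : ℝ} (hm : 0 ≤ m) (hT₀ : 1 ≤ T₀)
    (hinit : ∀ σ ≥ T₀, ∀ y ∈ closedBall (0 : EucN N) (σ ^ (1 / b)),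
      C⁻¹ * σ ^ (-(N : ℝ) / b) * m ≤ u σ y)
    {t : ℝ} (ht : T₀ ≤ t) {x : EucN N} (hx : ‖x‖ ≤ t ^ (1 / b)) :
    C⁻¹ * 2 ^ (-(N : ℝ) / b) * unitBallVolume N * (C⁻¹ * m) ^ p * t ^ (-(N : ℝ) / b) *
      log (t / T₀) ≤ u (2 * t) x := by
  set K := C⁻¹ * 2 ^ (-(N : ℝ) / b) * unitBallVolume N * (C⁻¹ * m) ^ p * t ^ (-(N : ℝ) / b)
  have hT₀0 : 0 < T₀ := by linarith
  have hg : IntegrableOn (fun σ => K * σ⁻¹) (Ioc T₀ t) :=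
    ((continuousOn_const.mul (continuousOn_inv₀.mono fun σ hσ => (hT₀0.trans_le hσ.1).ne'))
      |>.integrableOn_Icc).mono_set Ioc_subset_Icc_self
  have hlog : ∫ σ in Ioc T₀ t, K * σ⁻¹ = K * log (t / T₀) := by
    rw [integral_const_mul, ← intervalIntegral.integral_of_le ht, integral_inv]
    rw [uIcc_of_le ht]
    exact fun h => (not_le.2 hT₀0) h.1
  exact hlog ▸ hu.setIntegral_le hΓ (by linarith) hu₀ hT₀0.le ht (by linarith) hg
    fun σ hσ => hu.mul_inv_le_duhamelIntegrand hΓl hb hC hp hcrit hm (hT₀.trans hσ.1.le) hσ.2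
      (hinit σ hσ.1.le) hx

theorem mul_rpow_le_of_critical {p c K L T κ : ℝ} (hc : -1 ≤ c * (p - 1))
    (hκ : 0 ≤ κ) (hK : 0 ≤ K) (hL : 0 ≤ L) (hT : 1 ≤ T) :
    κ * (K * 2 ^ c) ^ (p - 1) * L ^ (p - 1) ≤ κ * T * (K * (2 * T) ^ c * L) ^ (p - 1) := by
  have hT0 : 0 < T := by linarith
  have hK2 : 0 ≤ K * 2 ^ c := by positivity
  calc κ * (K * 2 ^ c) ^ (p - 1) * L ^ (p - 1)
      ≤ κ * (K * 2 ^ c) ^ (p - 1) * L ^ (p - 1) * T ^ (1 + c * (p - 1)) :=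
        le_mul_of_one_le_right (by positivity) (one_le_rpow hT (by linarith))
    _ = κ * T * (K * (2 * T) ^ c * L) ^ (p - 1) := by
        rw [show K * (2 * T) ^ c * L = K * 2 ^ c * L * T ^ c by
            rw [mul_rpow zero_le_two hT0.le]; ring,
          mul_rpow (mul_nonneg hK2 hL) (by positivity), mul_rpow hK2 hL, ← rpow_mul hT0.le,
          rpow_add hT0, rpow_one]
        ring

theorem exists_window_lower_bound (hu : IsGlobalPowerSolution N Γ p u₀ u)
    (hΓ : IsTransitionDensity Γ) (hΓl : KernelLowerBound Γ b C) (hb : 0 < b) (hC : 0 < C)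
    (hp : 1 < p) (hcrit : N / b * (p - 1) ≤ 1) (hu₀ : ∀ x, 0 ≤ u₀ x) (hu₀ne : u₀ ≠ 0)
    {κ : ℝ} (hκ : 0 < κ) :
    ∃ T > 0, ∃ d₀ > 0, 2 ^ (p / (p - 1)) ≤ κ * T * d₀ ^ (p - 1) ∧
      ∀ σ ∈ Icc (2 * T) (4 * T), ∀ y ∈ closedBall (0 : EucN N) (T ^ (1 / b)), d₀ ≤ u σ y := by
  obtain ⟨m, hm, T₀, hT₀, hinit⟩ := hu.exists_initial_lower_bound hΓ hΓl hb hC hu₀ hu₀ne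
  set K := C⁻¹ * 2 ^ (-(N : ℝ) / b) * unitBallVolume N * (C⁻¹ * m) ^ p
  have hK : 0 < K := by have := unitBallVolume_pos N; positivity
  obtain ⟨L, hL⟩ := eventually_atTop.1
    (((tendsto_rpow_atTop (by linarith : 0 < p - 1)).eventually_ge_atTop
      (2 ^ (p / (p - 1)) / (κ * (K * 2 ^ (-(N : ℝ) / b)) ^ (p - 1)))).and
      (eventually_ge_atTop 1))
  obtain ⟨hLlarge, hL1⟩ := hL L le_rfl
  set T := T₀ * exp L
  have hT₀T : T₀ ≤ T := le_mul_of_one_le_right (by linarith) (one_le_exp (by linarith))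
  have hT : 0 < T := by linarith
  have hlogT : log (T / T₀) = L := by
    rw [mul_div_cancel_left₀ _ (by linarith : T₀ ≠ 0), log_exp]
  refine ⟨T, hT, K * (2 * T) ^ (-(N : ℝ) / b) * L, by positivity, ?_, fun σ hσ y hy => ?_⟩
  · exact ((div_le_iff₀' (by positivity)).1 hLlarge).trans (mul_rpow_le_of_critical
      (p := p) (c := -(N : ℝ) / b) (by rw [neg_div, neg_mul]; linarith) hκ.le hK.le
      (by linarith) (by linarith))
  · have hσ2 : 0 < σ / 2 := by linarith [hσ.1]
    have hlow := hu.mul_log_div_le hΓ hΓl hb hC hp hcrit hu₀ hm.le hT₀ hinit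
      (t := σ / 2) (by linarith [hσ.1]) (x := y) ((mem_closedBall_zero_iff.1 hy).trans
        (rpow_le_rpow hT.le (by linarith [hσ.1]) (by positivity)))
    rw [mul_div_cancel₀ σ two_ne_zero] at hlow
    refine le_trans ?_ hlow
    refine mul_le_mul (mul_le_mul_of_nonneg_left ?_ hK.le) ?_ (by linarith) (by positivity)
    · exact rpow_le_rpow_of_nonpos hσ2 (by linarith [hσ.2])
        (div_nonpos_of_nonpos_of_nonneg (neg_nonpos.2 N.cast_nonneg) hb.le)
    · rw [← hlogT]
      exact log_le_log (by positivity)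
        (div_le_div_of_nonneg_right (by linarith [hσ.1]) (by linarith))

theorem mul_rpow_le_of_le_on_cylinder (hu : IsGlobalPowerSolution N Γ p u₀ u)
    (hΓ : IsTransitionDensity Γ) (hΓl : KernelLowerBound Γ b C) (hb : 0 < b) (hC : 0 < C)
    (hp : 0 ≤ p) (hu₀ : ∀ x, 0 ≤ u₀ x) {σ δ e : ℝ} (hδ : 0 < δ) (hσδ : 0 < σ - 2 * δ)
    (he : 0 ≤ e)
    (hue : ∀ ς ∈ Ioc (σ - 2 * δ) (σ - δ), ∀ y ∈ closedBall (0 : EucN N) ((2 * δ) ^ (1 / b)),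
      e ≤ u ς y)
    {x : EucN N} (hx : x ∈ closedBall (0 : EucN N) (δ ^ (1 / b))) :
    C⁻¹ * 2 ^ (-(N : ℝ) / b) * unitBallVolume N * δ * e ^ p ≤ u σ x := by
  have hδpow : δ ^ (-(N : ℝ) / b) * δ ^ ((N : ℝ) / b) = 1 := by
    rw [← rpow_add hδ, neg_div, neg_add_cancel, rpow_zero]
  have hbound : ∀ ς ∈ Ioc (σ - 2 * δ) (σ - δ),
      C⁻¹ * 2 ^ (-(N : ℝ) / b) * unitBallVolume N * e ^ p ≤ ∫ y, Γ x y (σ - ς) * u ς y ^ p := by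
    intro ς hς
    refine le_of_eq_of_le ?_ (hΓl.le_integral_rpow_of_le_on_closedBall hb hC
      (hu.2.2.1 ς (by linarith [hς.1])) hp hδ (t := σ - ς) (R := 2 * δ) (by linarith [hς.2])
      (by linarith [hς.1]) he (fun y hy => hue ς hς y (closedBall_subset_closedBall
        (rpow_le_rpow hδ.le (by linarith) (by positivity)) hy))
      ((mem_closedBall_zero_iff.1 hx).trans
        (rpow_le_rpow hδ.le (by linarith [hς.2]) (by positivity))))
    rw [mul_rpow zero_le_two hδ.le]
    linear_combination (-(C⁻¹ * 2 ^ (-(N : ℝ) / b) * unitBallVolume N * e ^ p)) * hδpow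
  have hint := hu.setIntegral_le hΓ hp hu₀ hσδ.le (by linarith) (by linarith : σ - δ < σ)
    (integrableOn_const measure_Ioc_lt_top.ne) hbound
  rw [setIntegral_const, volume_real_Ioc_of_le (by linarith), smul_eq_mul] at hint
  linarith

end IsGlobalPowerSolution

theorem mul_pow_succ_le_of_superlinear {p c d₀ : ℝ} (hp : 1 < p) (hd₀ : 0 < d₀)
    (hc : 2 ^ (p / (p - 1)) ≤ c * d₀ ^ (p - 1)) (k : ℕ) :
    d₀ * (2 ^ (1 / (p - 1))) ^ (k + 1) ≤ c / 2 ^ (k + 1) * (d₀ * (2 ^ (1 / (p - 1))) ^ k) ^ p := by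
  set H : ℝ := 2 ^ (1 / (p - 1))
  have hp' : p - 1 ≠ 0 := by linarith
  have hH : 0 < H := by positivity
  have hHp : H ^ (p - 1) = 2 := by
    rw [← rpow_mul zero_le_two, one_div_mul_cancel hp', rpow_one]
  have h2H : (2 : ℝ) ^ (p / (p - 1)) = 2 * H := by
    rw [show p / (p - 1) = 1 + 1 / (p - 1) by field_simp; ring, rpow_add two_pos, rpow_one]
  have hsplit : ∀ x : ℝ, 0 < x → x ^ p = x * x ^ (p - 1) := fun x hx => by
    rw [← rpow_one_add' hx.le (by linarith)]; norm_num
  rw [mul_rpow hd₀.le (by positivity), ← rpow_pow_comm hH.le, hsplit H hH, hHp, hsplit d₀ hd₀]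
  calc d₀ * H ^ (k + 1) = 2 * H / 2 * (d₀ * H ^ k) := by ring
    _ ≤ c * d₀ ^ (p - 1) / 2 * (d₀ * H ^ k) := by
      gcongr ?_ / 2 * _
      exact h2H ▸ hc
    _ = _ := by field_simp; ring

theorem mul_pow_le_of_superlinear_step {X : Type*} (v : ℝ → X → ℝ) (B : ℝ → Set X)
    {p κ T s d₀ : ℝ} (hp : 1 < p) (hT : 0 < T) (hs : 2 * T < s) (hd₀ : 0 < d₀)
    (hlarge : 2 ^ (p / (p - 1)) ≤ κ * T * d₀ ^ (p - 1))
    (hbase : ∀ σ ∈ Icc (s - 2 * T) s, ∀ y ∈ B T, d₀ ≤ v σ y)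
    (hstep : ∀ σ δ e, 0 < δ → 0 < σ - 2 * δ → 0 ≤ e →
      (∀ ς ∈ Ioc (σ - 2 * δ) (σ - δ), ∀ y ∈ B (2 * δ), e ≤ v ς y) →
      ∀ x ∈ B δ, κ * δ * e ^ p ≤ v σ x) (k : ℕ) :
    ∀ σ ∈ Icc (s - 2 * T / 2 ^ k) s, ∀ y ∈ B (T / 2 ^ k),
      d₀ * (2 ^ (1 / (p - 1))) ^ k ≤ v σ y := by
  induction k with
  | zero => simpa using hbase
  | succ k ih =>
    intro σ hσ x hx
    set δ := T / 2 ^ (k + 1)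
    have h2δ : 2 * δ = T / 2 ^ k := by simp only [δ, pow_succ]; field_simp
    have h4δ : 2 * T / 2 ^ k = 4 * δ := by rw [mul_div_assoc, ← h2δ]; ring
    have hσ' : s - 2 * δ ≤ σ := by simpa [δ, mul_div_assoc] using hσ.1
    have h4δT : 4 * δ ≤ 2 * T := h4δ ▸ div_le_self (by linarith) (one_le_pow₀ one_le_two)
    refine (mul_pow_succ_le_of_superlinear hp hd₀ hlarge k).trans (le_of_eq_of_le (by ring)
      (hstep σ δ (d₀ * (2 ^ (1 / (p - 1))) ^ k) (by positivity) (by linarith) (by positivity)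
        (fun ς hς y hy => ih ς ⟨?_, by linarith [hς.2, hσ.2]⟩ y (h2δ ▸ hy)) x hx))
    linarith [hς.1]

theorem two_sub_pos_of_le_fujita {N : ℕ} {α p : ℝ} (hp : 1 < p)
    (hpcrit : p ≤ 1 + (2 - α) / N) : 0 < 2 - α := by
  by_contra! h
  linarith [div_nonpos_of_nonpos_of_nonneg h (Nat.cast_nonneg (α := ℝ) N)]

theorem mul_sub_one_le_one_of_le_fujita {N : ℕ} {α p : ℝ} (hp : 1 < p)
    (hpcrit : p ≤ 1 + (2 - α) / N) : N / (2 - α) * (p - 1) ≤ 1 := by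
  have hb := two_sub_pos_of_le_fujita hp hpcrit
  rcases N.eq_zero_or_pos with rfl | hN
  · simp
  · calc N / (2 - α) * (p - 1) ≤ N / (2 - α) * ((2 - α) / N) := by gcongr; linarith
      _ = 1 := by field_simp

theorem fujita_nonexistence_pure_power_general
    (N : ℕ) (α : ℝ)
    (Γ : EucN N → EucN N → ℝ → ℝ)
    (hΓmeas : Measurable fun p : EucN N × EucN N × ℝ => Γ p.1 p.2.1 p.2.2)
    (c₀ : ℝ)
    (hK1y : ∀ (x : EucN N) (t : ℝ), 0 < t → ∫ y, Γ x y t = 1)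
    (hK5 : ∀ (x y : EucN N) (t : ℝ), 0 < t →
      0 < Γ x y t ∧ Γ x y t ≤ c₀ * t ^ (-(N : ℝ) / (2 - α)))
    (S : ℝ → CbN N → CbN N)
    (hSΓ : ∀ (φ : CbN N) (t : ℝ), 0 < t → ∀ x, S t φ x = ∫ y, Γ x y t * φ y)
    -- kernel lower bound (Lemma 2.3):
    (CαN : ℝ) (hCαN : 0 < CαN)
    (hLower : ∀ φ : CbN N, (∀ x, 0 ≤ φ x) → ∀ t > (0 : ℝ), ∀ x : EucN N,
      ‖x‖ ≤ t ^ ((1 : ℝ) / (2 - α)) →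
      CαN⁻¹ * t ^ (-(N : ℝ) / (2 - α)) *
        (∫ y in closedBall (0 : EucN N) (t ^ ((1 : ℝ) / (2 - α))), φ y)
        ≤ S t φ x)
    (p : ℝ) (hp1 : 1 < p) (hpcrit : p ≤ 1 + (2 - α) / N) :
    ∀ u₀ : CbN N, (∀ x, 0 ≤ u₀ x) → u₀ ≠ 0 →
      ¬ ∃ u : ℝ → CbN N,
        IsGlobalSolution N Γ (fun _ => 1) (fun _ => 0) (fun z => z ^ p)
          (fun _ => 0) u₀ u := by
  rintro u₀ hu₀ hu₀ne ⟨u, hu⟩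
  have hb := two_sub_pos_of_le_fujita hp1 hpcrit
  have hcrit := mul_sub_one_le_one_of_le_fujita hp1 hpcrit
  have hΓ : IsTransitionDensity Γ := ⟨hΓmeas, fun x y t ht => (hK5 x y t ht).1.le, hK1y⟩
  have hΓl : KernelLowerBound Γ (2 - α) CαN := fun φ hφ t ht x hx =>
    (hLower φ hφ t ht x hx).trans_eq (hSΓ φ t ht x)
  replace hu : IsGlobalPowerSolution N Γ p u₀ u := hu
  obtain ⟨T, hT, d₀, hd₀, hlarge, hbase⟩ := hu.exists_window_lower_bound hΓ hΓl hb hCαN hp1 hcrit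
    hu₀ hu₀ne (κ := CαN⁻¹ * 2 ^ (-(N : ℝ) / (2 - α)) * unitBallVolume N)
    (by have := unitBallVolume_pos N; positivity)
  have hgrowth := mul_pow_le_of_superlinear_step (fun σ y => u σ y)
    (fun δ => closedBall (0 : EucN N) (δ ^ (1 / (2 - α)))) hp1 hT (by linarith) hd₀ hlarge
    (fun σ hσ => hbase σ ⟨by linarith [hσ.1], hσ.2⟩)
    (fun σ δ e hδ hσδ he hue x hx =>
      hu.mul_rpow_le_of_le_on_cylinder hΓ hΓl hb hCαN (by linarith) hu₀ hδ hσδ he hue hx)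
  obtain ⟨k, hk⟩ := pow_unbounded_of_one_lt (u (4 * T) 0 / d₀)
    (one_lt_rpow one_lt_two (one_div_pos.2 (by linarith : (0 : ℝ) < p - 1)))
  have hk' := hgrowth k (4 * T) ⟨by linarith [show 0 ≤ 2 * T / 2 ^ k by positivity], le_rfl⟩ 0
    (mem_closedBall_self (by positivity))
  rw [div_lt_iff₀ hd₀] at hk
  linarith

/-- Theorem 1.1(i) (after Fujishima et al.): for `u_t - div(ω∇u) = u^p` with
`1 < p ≤ 1 + (2-α)/N`, there is no nontrivial global solution. -/
theorem fujita_nonexistence_pure_power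
    (N : ℕ) (hN : 1 ≤ N) (α : ℝ) (hα0 : 0 ≤ α) (hα1 : α < 1)
    (Γ : EucN N → EucN N → ℝ → ℝ)
    (hΓmeas : Measurable fun p : EucN N × EucN N × ℝ => Γ p.1 p.2.1 p.2.2)
    (c₀ : ℝ) (hc₀ : 0 < c₀)
    (hK1y : ∀ (x : EucN N) (t : ℝ), 0 < t → ∫ y, Γ x y t = 1)
    (hK1x : ∀ (y : EucN N) (t : ℝ), 0 < t → ∫ x, Γ x y t = 1)
    (hK2 : ∀ (x y : EucN N) (s t : ℝ), 0 < s → s < t →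
      Γ x y t = ∫ ξ, Γ x ξ (t - s) * Γ ξ y s)
    (hK5 : ∀ (x y : EucN N) (t : ℝ), 0 < t →
      0 < Γ x y t ∧ Γ x y t ≤ c₀ * t ^ (-(N : ℝ) / (2 - α)))
    (S : ℝ → CbN N → CbN N)
    (hS0 : ∀ φ, S 0 φ = φ)
    (hSΓ : ∀ (φ : CbN N) (t : ℝ), 0 < t → ∀ x, S t φ x = ∫ y, Γ x y t * φ y)
    (hK4 : ∀ φ : CbN N, ContinuousOn (fun t => S t φ) (Ici (0 : ℝ)))
    -- kernel lower bound (Lemma 2.3):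
    (CαN : ℝ) (hCαN : 0 < CαN)
    (hLower : ∀ φ : CbN N, (∀ x, 0 ≤ φ x) → ∀ t > (0 : ℝ), ∀ x : EucN N,
      ‖x‖ ≤ t ^ ((1 : ℝ) / (2 - α)) →
      CαN⁻¹ * t ^ (-(N : ℝ) / (2 - α)) *
        (∫ y in closedBall (0 : EucN N) (t ^ ((1 : ℝ) / (2 - α))), φ y)
        ≤ S t φ x)
    -- mass non-escape estimate ((2.11)–(2.12) of Fujishima et al.):
    (C₀ : ℝ) (hC₀ : 0 < C₀)
    (hMass : ∀ t > (0 : ℝ), ∀ y : EucN N, ‖y‖ ≤ t ^ ((1 : ℝ) / (2 - α)) →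
      C₀ ≤ ∫ x in closedBall (0 : EucN N) (t ^ ((1 : ℝ) / (2 - α))), Γ x y t)
    (p : ℝ) (hp1 : 1 < p) (hpcrit : p ≤ 1 + (2 - α) / N) :
    ∀ u₀ : CbN N, (∀ x, 0 ≤ u₀ x) → u₀ ≠ 0 →
      ¬ ∃ u : ℝ → CbN N,
        IsGlobalSolution N Γ (fun _ => 1) (fun _ => 0) (fun z => z ^ p)
          (fun _ => 0) u₀ u :=
  fujita_nonexistence_pure_power_general N α Γ hΓmeas c₀ hK1y hK5 S hSΓ CαN hCαN hLower p hp1 hpcrit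
end
end
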